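/- arXiv:2503.21434 — 8 statements merged into one kernel-verified Lean document; each statement's English description precedes it below -/
import Mathlib

section
/- Let (C, ⊗, I) be a monoidal category and let (N, z, s) be a natural numbers algebra in C. Suppose that the numerals 0̲ and 1̲ are distinct, and that there exists a morphism p : N ⟶ N representing the total predecessor function pred : ℕ → ℕ (defined by pred 0 = 0 and pred (n+1) = n), i.e. n̲ ≫ p = (pred n)̲ for every n ∈ ℕ. Then (N, z, s) is a strong natural numbers algebra: for all n, m ∈ ℕ, n̲ = m̲ implies n = m. -/
open CategoryTheory CategoryTheory.MonoidalCategory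

universe v u

/-- The numerals of a natural numbers algebra `(N, z, s)` in a monoidal category:
`0̲ = z` and `(n+1)̲ = n̲ ≫ s`. -/
def numeral {C : Type u} [Category.{v} C] [MonoidalCategory C] {N : C}
    (z : 𝟙_ C ⟶ N) (s : N ⟶ N) : ℕ → (𝟙_ C ⟶ N)
  | 0 => z
  | n + 1 => numeral z s n ≫ s

/-- If `0̲ ≠ 1̲` and the total predecessor function is representable, then the
natural numbers algebra `(N, z, s)` is strong, i.e. `n ↦ n̲` is injective. -/
theorem strong_of_pred_representable {C : Type u} [Category.{v} C] [MonoidalCategory C]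
    {N : C} (z : 𝟙_ C ⟶ N) (s : N ⟶ N)
    (hne : numeral z s 0 ≠ numeral z s 1)
    (p : N ⟶ N) (hp : ∀ n : ℕ, numeral z s n ≫ p = numeral z s n.pred) :
    Function.Injective (numeral z s) := by
  have h0 : ∀ k : ℕ, numeral z s 0 ≠ numeral z s (k + 1) := by
    intro k
    induction k with
    | zero => exact hne
    | succ k ih =>
      intro h
      apply ih
      have := congrArg (· ≫ p) h
      simpa [hp 0, hp (k + 2)] using this
  intro n
  induction n with
  | zero =>
    intro m h
    cases m with
    | zero => rfl
    | succ m => exact absurd h (h0 m)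
  | succ n ih =>
    intro m h
    cases m with
    | zero => exact absurd h.symm (h0 n)
    | succ m =>
      have := congrArg (· ≫ p) h
      simp only [hp (n + 1), hp (m + 1), Nat.pred_succ] at this
      exact congrArg Nat.succ (ih this)
end

section
/- Let C be a category with binary coproducts equipped with a monoidal structure (⊗, I), let N be an object of C, and let ι : I ⨿ N ⟶ N be an isomorphism; set z = inl ≫ ι and s = inr ≫ ι. If the numerals 0̲ and 1̲ are distinct, then (N, z, s) is a strong natural numbers algebra: for all n, m ∈ ℕ, n̲ = m̲ implies n = m. -/
open CategoryTheory CategoryTheory.Limits CategoryTheory.MonoidalCategory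

universe v u

/-- If `ι : I ⨿ N ⟶ N` is an isomorphism, `z = inl ≫ ι`, `s = inr ≫ ι`, and the
numerals `0̲` and `1̲` are distinct, then `(N, z, s)` is a strong natural numbers
algebra: `n ↦ n̲` is injective. -/
theorem strong_of_iota_iso {C : Type u} [Category.{v} C] [MonoidalCategory C]
    [HasBinaryCoproducts C] {N : C} (ι : (𝟙_ C ⨿ N) ≅ N)
    (hne : numeral (coprod.inl ≫ ι.hom) (coprod.inr ≫ ι.hom) 0 ≠
      numeral (coprod.inl ≫ ι.hom) (coprod.inr ≫ ι.hom) 1) :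
    Function.Injective (numeral (coprod.inl ≫ ι.hom) (coprod.inr ≫ ι.hom)) := by
  set z : 𝟙_ C ⟶ N := coprod.inl ≫ ι.hom with hz
  set s : N ⟶ N := coprod.inr ≫ ι.hom with hs
  -- cancel `inr` on the right
  have hinr : ∀ x y : 𝟙_ C ⟶ N, x ≫ (coprod.inr : N ⟶ 𝟙_ C ⨿ N) = y ≫ coprod.inr → x = y := by
    intro x y h
    have := h =≫ coprod.desc z (𝟙 N)
    simpa [coprod.inr_desc] using this
  -- `inl ≠ x ≫ inr`
  have hne' : z ≠ z ≫ s := hne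
  have hinl : ∀ x : 𝟙_ C ⟶ N, (coprod.inl : 𝟙_ C ⟶ 𝟙_ C ⨿ N) ≠ x ≫ coprod.inr := by
    intro x h
    have h1 : z = x := by
      have := h =≫ coprod.desc z (𝟙 N)
      simpa [hz, Category.assoc, coprod.inl_desc, coprod.inr_desc] using this
    have h2 : z = x ≫ s := by
      have := h =≫ coprod.desc z s
      simpa [hz, Category.assoc, coprod.inl_desc, coprod.inr_desc] using this
    exact hne' (h2.trans (by rw [h1]))
  -- successor formula after composing with `ι.inv`
  have hsucc : ∀ n, numeral z s (n + 1) ≫ ι.inv = numeral z s n ≫ coprod.inr := by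
    intro n
    simp [numeral, hs, Category.assoc]
  have hzeroinv : numeral z s 0 ≫ ι.inv = coprod.inl := by
    simp [numeral, hz, Category.assoc]
  intro n m h
  induction n generalizing m with
  | zero =>
    cases m with
    | zero => rfl
    | succ m =>
      exact absurd (by rw [← hzeroinv, h, hsucc]) (hinl (numeral z s m))
  | succ n ih =>
    cases m with
    | zero =>
      exact absurd (by rw [← hzeroinv, ← h, hsucc]) (hinl (numeral z s n))
    | succ m =>
      have : numeral z s n ≫ (coprod.inr : N ⟶ 𝟙_ C ⨿ N) = numeral z s m ≫ coprod.inr := by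
        rw [← hsucc, ← hsucc, h]
      rw [ih (hinr _ _ this)]
end

section
/- In any pre-Elgot category with distinguished object N and isomorphism ι : I ⨿ N ⟶ N, the natural numbers algebra (N, z, s) with z = inl ≫ ι and s = inr ≫ ι is a weak left natural numbers object: for all morphisms b : B ⟶ A and a : A ⟶ A there exists h : N ⊗ B ⟶ A with (z ⊗ 1_B) ≫ h = λ_B ≫ b and (s ⊗ 1_B) ≫ h = h ≫ a. -/
open CategoryTheory CategoryTheory.Limits CategoryTheory.MonoidalCategory

set_option maxHeartbeats 1000000

universe v u

attribute [simp] coprod.inl_desc coprod.inr_desc coprod.inl_desc_assoc coprod.inr_desc_assoc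

section Aux

variable {C : Type u} [Category.{v} C] [HasBinaryCoproducts C]
variable (Tr : ∀ (A B X : C), (A ⨿ X ⟶ B ⨿ X) → (A ⟶ B))

theorem aux_map_desc_eq {W X Y Z : C} (f : W ⟶ Y) (g : X ⟶ Z) :
    coprod.map f g = coprod.desc (f ≫ coprod.inl) (g ≫ coprod.inr) := by
  apply coprod.hom_ext <;> simp

@[simp] theorem aux_desc_inl_inr_comp {X Y Z : C} (f : X ⨿ Y ⟶ Z) :
    coprod.desc (coprod.inl ≫ f) (coprod.inr ≫ f) = f := by
  apply coprod.hom_ext <;> simp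

/-- A loop whose body immediately exits can be computed away (derived from yanking). -/
theorem aux_trace_desc_inl
    (tr3 : ∀ (A A' B B' X : C) (g : A' ⟶ A) (f : A ⨿ X ⟶ B ⨿ X) (h : B ⟶ B'),
      g ≫ Tr A B X f ≫ h = Tr A' B' X (coprod.map g (𝟙 X) ≫ f ≫ coprod.map h (𝟙 X)))
    (tr4 : ∀ (A B D X : C) (f : A ⨿ X ⟶ B ⨿ X),
      coprod.map (𝟙 D) (Tr A B X f) = Tr (D ⨿ A) (D ⨿ B) X
        ((coprod.associator D A X).hom ≫ coprod.map (𝟙 D) f ≫ (coprod.associator D B X).inv))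
    (tr6 : ∀ A : C, Tr A A A (coprod.braiding A A).hom = 𝟙 A)
    (A B : C) (u : A ⟶ B ⨿ B) :
    Tr A B B (coprod.desc u coprod.inl) = u ≫ coprod.desc (𝟙 B) (𝟙 B) := by
  have h4 := tr4 B B B B (coprod.braiding B B).hom
  rw [tr6] at h4
  have h3 := tr3 (B ⨿ B) A (B ⨿ B) B B u
      ((coprod.associator B B B).hom ≫ coprod.map (𝟙 B) (coprod.braiding B B).hom ≫
        (coprod.associator B B B).inv)
      (coprod.desc (𝟙 B) (𝟙 B))
  rw [← h4] at h3
  have hbody : coprod.map u (𝟙 B) ≫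
      ((coprod.associator B B B).hom ≫ coprod.map (𝟙 B) (coprod.braiding B B).hom ≫
        (coprod.associator B B B).inv) ≫
      coprod.map (coprod.desc (𝟙 B) (𝟙 B)) (𝟙 B) = coprod.desc u coprod.inl := by
    apply coprod.hom_ext <;> simp [coprod.associator, coprod.braiding]
  rw [hbody] at h3
  simpa using h3.symm

/-- A loop whose body exits after one step can be computed away. -/
theorem aux_oneShot
    (tr3 : ∀ (A A' B B' X : C) (g : A' ⟶ A) (f : A ⨿ X ⟶ B ⨿ X) (h : B ⟶ B'),
      g ≫ Tr A B X f ≫ h = Tr A' B' X (coprod.map g (𝟙 X) ≫ f ≫ coprod.map h (𝟙 X)))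
    (tr4 : ∀ (A B D X : C) (f : A ⨿ X ⟶ B ⨿ X),
      coprod.map (𝟙 D) (Tr A B X f) = Tr (D ⨿ A) (D ⨿ B) X
        ((coprod.associator D A X).hom ≫ coprod.map (𝟙 D) f ≫ (coprod.associator D B X).inv))
    (tr5 : ∀ (A B X Y : C) (h : X ⟶ Y) (f : A ⨿ Y ⟶ B ⨿ X),
      Tr A B X (coprod.map (𝟙 A) h ≫ f) = Tr A B Y (f ≫ coprod.map (𝟙 B) h))
    (tr6 : ∀ A : C, Tr A A A (coprod.braiding A A).hom = 𝟙 A)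
    (A B X : C) (f : A ⟶ B ⨿ X) (k : X ⟶ B) :
    Tr A B X (coprod.desc f (k ≫ coprod.inl)) = f ≫ coprod.desc (𝟙 B) k := by
  have e1 : coprod.desc f (k ≫ coprod.inl) =
      coprod.map (𝟙 A) k ≫ coprod.desc f (coprod.inl : B ⟶ B ⨿ X) := by
    simp
  have e3 : coprod.desc f (coprod.inl : B ⟶ B ⨿ X) ≫ coprod.map (𝟙 B) k =
      coprod.desc (f ≫ coprod.map (𝟙 B) k) (coprod.inl : B ⟶ B ⨿ B) := by
    simp
  rw [e1, tr5 A B X B k (coprod.desc f (coprod.inl : B ⟶ B ⨿ X)), e3,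
    aux_trace_desc_inl Tr tr3 tr4 tr6]
  simp

/-- Unfolding the entry of an iteration loop once. -/
theorem aux_unfold
    (tr2 : ∀ (A B X Y : C) (f : A ⨿ (X ⨿ Y) ⟶ B ⨿ (X ⨿ Y)),
      Tr A B (X ⨿ Y) f = Tr A B X (Tr (A ⨿ X) (B ⨿ X) Y
        ((coprod.associator A X Y).hom ≫ f ≫ (coprod.associator B X Y).inv)))
    (tr3 : ∀ (A A' B B' X : C) (g : A' ⟶ A) (f : A ⨿ X ⟶ B ⨿ X) (h : B ⟶ B'),
      g ≫ Tr A B X f ≫ h = Tr A' B' X (coprod.map g (𝟙 X) ≫ f ≫ coprod.map h (𝟙 X)))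
    (tr4 : ∀ (A B D X : C) (f : A ⨿ X ⟶ B ⨿ X),
      coprod.map (𝟙 D) (Tr A B X f) = Tr (D ⨿ A) (D ⨿ B) X
        ((coprod.associator D A X).hom ≫ coprod.map (𝟙 D) f ≫ (coprod.associator D B X).inv))
    (tr5 : ∀ (A B X Y : C) (h : X ⟶ Y) (f : A ⨿ Y ⟶ B ⨿ X),
      Tr A B X (coprod.map (𝟙 A) h ≫ f) = Tr A B Y (f ≫ coprod.map (𝟙 B) h))
    (tr6 : ∀ A : C, Tr A A A (coprod.braiding A A).hom = 𝟙 A)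
    (A B X : C) (e : A ⟶ B ⨿ X) (k : X ⟶ B ⨿ X) :
    Tr A B X (coprod.desc e k) =
      e ≫ coprod.desc (𝟙 B) (Tr X B X (coprod.desc k k)) := by
  -- the three-register systems
  set Θa : A ⨿ (X ⨿ X) ⟶ B ⨿ (X ⨿ X) :=
    coprod.desc (e ≫ coprod.map (𝟙 B) coprod.inl)
      (coprod.desc (k ≫ coprod.map (𝟙 B) coprod.inr)
        ((coprod.inl : X ⟶ X ⨿ X) ≫ coprod.inr)) with hΘa
  set Θb : A ⨿ (X ⨿ X) ⟶ B ⨿ (X ⨿ X) :=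
    coprod.desc (e ≫ coprod.map (𝟙 B) coprod.inr)
      (coprod.desc ((coprod.inr : X ⟶ X ⨿ X) ≫ coprod.inr)
        (k ≫ coprod.map (𝟙 B) coprod.inl)) with hΘb
  set Θm : A ⨿ (X ⨿ X) ⟶ B ⨿ (X ⨿ X) :=
    coprod.desc (e ≫ coprod.map (𝟙 B) coprod.inl)
      (coprod.desc ((coprod.inl : X ⟶ X ⨿ X) ≫ coprod.inr)
        (k ≫ coprod.map (𝟙 B) coprod.inr)) with hΘm
  -- step u1 : Tr Θa computes the left-hand side
  have u1 : Tr A B (X ⨿ X) Θa = Tr A B X (coprod.desc e k) := by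
    rw [tr2]
    have hinner : (coprod.associator A X X).hom ≫ Θa ≫ (coprod.associator B X X).inv =
        coprod.desc
          (coprod.desc (e ≫ coprod.inl) (k ≫ coprod.map (coprod.inl : B ⟶ B ⨿ X) (𝟙 X)))
          ((coprod.inr : X ⟶ B ⨿ X) ≫ coprod.inl) := by
      apply coprod.hom_ext
      · apply coprod.hom_ext <;> simp [coprod.associator, hΘa, aux_map_desc_eq]
      · simp [coprod.associator, hΘa, aux_map_desc_eq]
    rw [hinner, aux_oneShot Tr tr3 tr4 tr5 tr6]
    congr 1
    apply coprod.hom_ext <;> simp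
  -- step u2 : sliding the braiding
  have u2 : Tr A B (X ⨿ X) Θa = Tr A B (X ⨿ X) Θb := by
    have hA : coprod.map (𝟙 A) (coprod.braiding X X).hom ≫ Θm = Θa := by
      apply coprod.hom_ext
      · simp [hΘa, hΘm]
      · apply coprod.hom_ext <;> simp [coprod.braiding, hΘa, hΘm]
    have hB : Θm ≫ coprod.map (𝟙 B) (coprod.braiding X X).hom = Θb := by
      apply coprod.hom_ext
      · simp [hΘb, hΘm, coprod.braiding]
      · apply coprod.hom_ext <;> simp [coprod.braiding, hΘb, hΘm]
    rw [← hA, ← hB, tr5]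
  -- step u3 : Tr Θb computes the once-unfolded loop
  have u3 : Tr A B (X ⨿ X) Θb =
      Tr A B X (coprod.desc (e ≫ coprod.desc coprod.inl k) k) := by
    rw [tr2]
    have hinner : (coprod.associator A X X).hom ≫ Θb ≫ (coprod.associator B X X).inv =
        coprod.desc
          (coprod.desc (e ≫ coprod.map (coprod.inl : B ⟶ B ⨿ X) (𝟙 X))
            (coprod.inr : X ⟶ (B ⨿ X) ⨿ X))
          (k ≫ coprod.inl) := by
      apply coprod.hom_ext
      · apply coprod.hom_ext <;> simp [coprod.associator, hΘb, aux_map_desc_eq]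
      · simp [coprod.associator, hΘb, aux_map_desc_eq]
    rw [hinner, aux_oneShot Tr tr3 tr4 tr5 tr6]
    congr 1
    apply coprod.hom_ext <;> simp
  -- step u4 : the right-hand side as a trace
  have u4 : e ≫ coprod.desc (𝟙 B) (Tr X B X (coprod.desc k k)) =
      Tr A B X (coprod.desc (e ≫ coprod.desc coprod.inl k) k) := by
    have h4 := tr4 X B B X (coprod.desc k k)
    have h3 := tr3 (B ⨿ X) A (B ⨿ B) B X e
        ((coprod.associator B X X).hom ≫ coprod.map (𝟙 B) (coprod.desc k k) ≫
          (coprod.associator B B X).inv)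
        (coprod.desc (𝟙 B) (𝟙 B))
    rw [← h4] at h3
    have hpre : e ≫ coprod.desc (𝟙 B) (Tr X B X (coprod.desc k k)) =
        e ≫ coprod.map (𝟙 B) (Tr X B X (coprod.desc k k)) ≫ coprod.desc (𝟙 B) (𝟙 B) := by
      simp
    rw [hpre, ← Category.assoc, Category.assoc, h3]
    congr 1
    apply coprod.hom_ext <;>
      simp [coprod.associator, aux_map_desc_eq]
  rw [← u1, u2, u3, u4]

end Aux

/-- In any pre-Elgot category (a distributive monoidal category with a trace on its
coproduct structure and an isomorphism `ι : I ⨿ N ≅ N`), the natural numbers algebra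
`(N, inl ≫ ι, inr ≫ ι)` is a weak left natural numbers object. -/
theorem preElgot_weakLeftNNO {C : Type u} [Category.{v} C] [MonoidalCategory C]
    [HasBinaryCoproducts C] [HasInitial C]
    -- the right distributors: inverses of the canonical maps
    (δr : ∀ A B X : C, ((A ⊗ X) ⨿ (B ⊗ X)) ≅ ((A ⨿ B) ⊗ X))
    (hδr : ∀ A B X : C, (δr A B X).hom =
      coprod.desc ((coprod.inl : A ⟶ A ⨿ B) ⊗ₘ 𝟙 X) ((coprod.inr : B ⟶ A ⨿ B) ⊗ₘ 𝟙 X))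
    -- the left distributors: inverses of the canonical maps
    (δl : ∀ X A B : C, ((X ⊗ A) ⨿ (X ⊗ B)) ≅ (X ⊗ (A ⨿ B)))
    (hδl : ∀ X A B : C, (δl X A B).hom =
      coprod.desc (𝟙 X ⊗ₘ (coprod.inl : A ⟶ A ⨿ B)) (𝟙 X ⊗ₘ (coprod.inr : B ⟶ A ⨿ B)))
    -- the annihilators: the maps from the initial object are isomorphisms
    (hannr : ∀ A : C, IsIso (initial.to (A ⊗ ⊥_ C)))
    (hannl : ∀ A : C, IsIso (initial.to ((⊥_ C) ⊗ A)))
    -- a trace on the coproduct structure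
    (Tr : ∀ (A B X : C), (A ⨿ X ⟶ B ⨿ X) → (A ⟶ B))
    (tr1 : ∀ (A B : C) (f : A ⨿ ⊥_ C ⟶ B ⨿ ⊥_ C),
      Tr A B (⊥_ C) f = (coprod.rightUnitor A).inv ≫ f ≫ (coprod.rightUnitor B).hom)
    (tr2 : ∀ (A B X Y : C) (f : A ⨿ (X ⨿ Y) ⟶ B ⨿ (X ⨿ Y)),
      Tr A B (X ⨿ Y) f = Tr A B X (Tr (A ⨿ X) (B ⨿ X) Y
        ((coprod.associator A X Y).hom ≫ f ≫ (coprod.associator B X Y).inv)))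
    (tr3 : ∀ (A A' B B' X : C) (g : A' ⟶ A) (f : A ⨿ X ⟶ B ⨿ X) (h : B ⟶ B'),
      g ≫ Tr A B X f ≫ h = Tr A' B' X (coprod.map g (𝟙 X) ≫ f ≫ coprod.map h (𝟙 X)))
    (tr4 : ∀ (A B D X : C) (f : A ⨿ X ⟶ B ⨿ X),
      coprod.map (𝟙 D) (Tr A B X f) = Tr (D ⨿ A) (D ⨿ B) X
        ((coprod.associator D A X).hom ≫ coprod.map (𝟙 D) f ≫ (coprod.associator D B X).inv))
    (tr5 : ∀ (A B X Y : C) (h : X ⟶ Y) (f : A ⨿ Y ⟶ B ⨿ X),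
      Tr A B X (coprod.map (𝟙 A) h ≫ f) = Tr A B Y (f ≫ coprod.map (𝟙 B) h))
    (tr6 : ∀ A : C, Tr A A A (coprod.braiding A A).hom = 𝟙 A)
    -- the distinguished object and isomorphism
    {N : C} (ι : ((𝟙_ C) ⨿ N) ≅ N) :
    ∀ (A B : C) (b : B ⟶ A) (a : A ⟶ A), ∃ h : N ⊗ B ⟶ A,
      ((coprod.inl ≫ ι.hom) ⊗ₘ 𝟙 B) ≫ h = (λ_ B).hom ≫ b ∧
      ((coprod.inr ≫ ι.hom) ⊗ₘ 𝟙 B) ≫ h = h ≫ a := by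
  intro A B b a
  set u : N ⊗ A ⟶ N ⊗ A := 𝟙 N ⊗ₘ a with hu
  set p : N ⊗ A ⟶ A ⨿ (N ⊗ A) :=
    (ι.inv ⊗ₘ 𝟙 A) ≫ (δr (𝟙_ C) N A).inv ≫ coprod.map (λ_ A).hom (𝟙 (N ⊗ A)) with hp
  set T : N ⊗ A ⟶ A := Tr (N ⊗ A) A (N ⊗ A) (coprod.desc p (u ≫ p)) with hT
  -- distributor facts
  have hdinl : ((coprod.inl : 𝟙_ C ⟶ 𝟙_ C ⨿ N) ⊗ₘ 𝟙 A) ≫ (δr (𝟙_ C) N A).inv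
      = coprod.inl := by
    rw [Iso.comp_inv_eq, hδr]; simp
  have hdinr : ((coprod.inr : N ⟶ 𝟙_ C ⨿ N) ⊗ₘ 𝟙 A) ≫ (δr (𝟙_ C) N A).inv
      = coprod.inr := by
    rw [Iso.comp_inv_eq, hδr]; simp
  -- behaviour of p on zero and successor
  have e_z : ((coprod.inl ≫ ι.hom) ⊗ₘ 𝟙 A) ≫ p = (λ_ A).hom ≫ coprod.inl := by
    have hc : ((coprod.inl ≫ ι.hom) ⊗ₘ 𝟙 A) ≫ (ι.inv ⊗ₘ 𝟙 A)
        = ((coprod.inl : 𝟙_ C ⟶ 𝟙_ C ⨿ N) ⊗ₘ 𝟙 A) := by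
      rw [tensorHom_comp_tensorHom]; simp
    rw [hp, ← Category.assoc, hc, ← Category.assoc, hdinl]; simp
  have e_s : ((coprod.inr ≫ ι.hom) ⊗ₘ 𝟙 A) ≫ p = coprod.inr := by
    have hc : ((coprod.inr ≫ ι.hom) ⊗ₘ 𝟙 A) ≫ (ι.inv ⊗ₘ 𝟙 A)
        = ((coprod.inr : N ⟶ 𝟙_ C ⨿ N) ⊗ₘ 𝟙 A) := by
      rw [tensorHom_comp_tensorHom]; simp
    rw [hp, ← Category.assoc, hc, ← Category.assoc, hdinr]; simp
  -- the commutation square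
  have e_sq : u ≫ p = p ≫ coprod.map a u := by
    have s1 : u ≫ (ι.inv ⊗ₘ 𝟙 A) = (ι.inv ⊗ₘ 𝟙 A) ≫ (𝟙 (𝟙_ C ⨿ N) ⊗ₘ a) := by
      rw [tensorHom_comp_tensorHom, tensorHom_comp_tensorHom]; simp
    have s2' : (δr (𝟙_ C) N A).hom ≫ (𝟙 (𝟙_ C ⨿ N) ⊗ₘ a) =
        coprod.map (𝟙 (𝟙_ C) ⊗ₘ a) (𝟙 N ⊗ₘ a) ≫ (δr (𝟙_ C) N A).hom := by
      rw [hδr]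
      apply coprod.hom_ext <;>
        simp only [coprod.inl_desc_assoc, coprod.inr_desc_assoc, coprod.inl_desc,
          coprod.inr_desc, coprod.inl_map_assoc, coprod.inr_map_assoc, coprod.inl_map,
          coprod.inr_map, tensor_id_comp_id_tensor, id_tensor_comp_tensor_id,
          tensor_id_comp_id_tensor_assoc, id_tensor_comp_tensor_id_assoc]
    have s2 : (𝟙 (𝟙_ C ⨿ N) ⊗ₘ a) ≫ (δr (𝟙_ C) N A).inv =
        (δr (𝟙_ C) N A).inv ≫ coprod.map (𝟙 (𝟙_ C) ⊗ₘ a) (𝟙 N ⊗ₘ a) := by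
      rw [Iso.comp_inv_eq, Category.assoc, ← s2', Iso.inv_hom_id_assoc]
    have s3 : coprod.map (𝟙 (𝟙_ C) ⊗ₘ a) (𝟙 N ⊗ₘ a) ≫ coprod.map (λ_ A).hom (𝟙 (N ⊗ A)) =
        coprod.map (λ_ A).hom (𝟙 (N ⊗ A)) ≫ coprod.map a u := by
      apply coprod.hom_ext <;> simp [hu]
    rw [hp]
    slice_lhs 1 2 => rw [s1]
    slice_lhs 2 3 => rw [s2]
    slice_lhs 3 4 => rw [s3]
    simp
  -- the iteration commutes with a
  have k1 : u ≫ T = Tr (N ⊗ A) A (N ⊗ A) (coprod.desc (u ≫ p) (u ≫ p)) := by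
    have h := tr3 (N ⊗ A) (N ⊗ A) A A (N ⊗ A) u (coprod.desc p (u ≫ p)) (𝟙 A)
    rw [Category.comp_id] at h
    rw [hT, h]
    congr 1
    apply coprod.hom_ext <;> simp
  have k2 : Tr (N ⊗ A) A (N ⊗ A) (coprod.desc (u ≫ p) (u ≫ p)) = T ≫ a := by
    have hslide := tr5 (N ⊗ A) A (N ⊗ A) (N ⊗ A) u
        (coprod.desc (𝟙 (N ⊗ A)) (𝟙 (N ⊗ A)) ≫ p ≫ coprod.map a (𝟙 (N ⊗ A)))
    have hL : coprod.map (𝟙 (N ⊗ A)) u ≫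
        coprod.desc (𝟙 (N ⊗ A)) (𝟙 (N ⊗ A)) ≫ p ≫ coprod.map a (𝟙 (N ⊗ A))
        = coprod.desc p (u ≫ p) ≫ coprod.map a (𝟙 (N ⊗ A)) := by
      apply coprod.hom_ext <;> simp
    have hau : coprod.map a (𝟙 (N ⊗ A)) ≫ coprod.map (𝟙 A) u = coprod.map a u := by
      apply coprod.hom_ext <;> simp
    have hR : (coprod.desc (𝟙 (N ⊗ A)) (𝟙 (N ⊗ A)) ≫ p ≫ coprod.map a (𝟙 (N ⊗ A))) ≫
        coprod.map (𝟙 A) u = coprod.desc (u ≫ p) (u ≫ p) := by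
      apply coprod.hom_ext <;> simp [hau, ← e_sq]
    rw [hL, hR] at hslide
    rw [← hslide]
    have h := tr3 (N ⊗ A) (N ⊗ A) A A (N ⊗ A) (𝟙 (N ⊗ A)) (coprod.desc p (u ≫ p)) a
    rw [Category.id_comp, coprod.map_id_id, Category.id_comp] at h
    rw [hT, h]
  have k3 : u ≫ T = T ≫ a := by rw [k1, k2]
  -- zero and successor behaviour of the iteration
  have k4 : ((coprod.inl ≫ ι.hom) ⊗ₘ 𝟙 A) ≫ T = (λ_ A).hom := by
    have h := tr3 (N ⊗ A) (𝟙_ C ⊗ A) A A (N ⊗ A) ((coprod.inl ≫ ι.hom) ⊗ₘ 𝟙 A)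
        (coprod.desc p (u ≫ p)) (𝟙 A)
    rw [Category.comp_id] at h
    rw [hT, h]
    have hbody : coprod.map ((coprod.inl ≫ ι.hom) ⊗ₘ 𝟙 A) (𝟙 (N ⊗ A)) ≫
        coprod.desc p (u ≫ p) ≫ coprod.map (𝟙 A) (𝟙 (N ⊗ A)) =
        coprod.desc ((λ_ A).hom ≫ coprod.inl) (u ≫ p) := by
      apply coprod.hom_ext <;>
        simp only [coprod.inl_map_assoc, coprod.inr_map_assoc, coprod.inl_desc_assoc,
          coprod.inr_desc_assoc, coprod.inl_desc, coprod.inr_desc, coprod.map_id_id,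
          Category.comp_id, Category.id_comp, Category.assoc, e_z]
    rw [hbody, aux_unfold Tr tr2 tr3 tr4 tr5 tr6]
    simp
  have k5 : ((coprod.inr ≫ ι.hom) ⊗ₘ 𝟙 A) ≫ T = u ≫ T := by
    have h := tr3 (N ⊗ A) (N ⊗ A) A A (N ⊗ A) ((coprod.inr ≫ ι.hom) ⊗ₘ 𝟙 A)
        (coprod.desc p (u ≫ p)) (𝟙 A)
    rw [Category.comp_id] at h
    rw [hT, h]
    have hbody : coprod.map ((coprod.inr ≫ ι.hom) ⊗ₘ 𝟙 A) (𝟙 (N ⊗ A)) ≫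
        coprod.desc p (u ≫ p) ≫ coprod.map (𝟙 A) (𝟙 (N ⊗ A)) =
        coprod.desc (coprod.inr : N ⊗ A ⟶ A ⨿ (N ⊗ A)) (u ≫ p) := by
      apply coprod.hom_ext <;>
        simp only [coprod.inl_map_assoc, coprod.inr_map_assoc, coprod.inl_desc_assoc,
          coprod.inr_desc_assoc, coprod.inl_desc, coprod.inr_desc, coprod.map_id_id,
          Category.comp_id, Category.id_comp, Category.assoc, e_s]
    rw [hbody, aux_unfold Tr tr2 tr3 tr4 tr5 tr6]
    rw [k1]
    simp
  -- conclusion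
  refine ⟨(𝟙 N ⊗ₘ b) ≫ T, ?_, ?_⟩
  · have swap : ((coprod.inl ≫ ι.hom) ⊗ₘ 𝟙 B) ≫ (𝟙 N ⊗ₘ b)
        = (𝟙 (𝟙_ C) ⊗ₘ b) ≫ ((coprod.inl ≫ ι.hom) ⊗ₘ 𝟙 A) := by
      rw [tensorHom_comp_tensorHom, tensorHom_comp_tensorHom]; simp
    rw [← Category.assoc, swap, Category.assoc, k4]
    simp
  · have swap : ((coprod.inr ≫ ι.hom) ⊗ₘ 𝟙 B) ≫ (𝟙 N ⊗ₘ b)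
        = (𝟙 N ⊗ₘ b) ≫ ((coprod.inr ≫ ι.hom) ⊗ₘ 𝟙 A) := by
      rw [tensorHom_comp_tensorHom, tensorHom_comp_tensorHom]; simp
    calc ((coprod.inr ≫ ι.hom) ⊗ₘ 𝟙 B) ≫ (𝟙 N ⊗ₘ b) ≫ T
        = (𝟙 N ⊗ₘ b) ≫ ((coprod.inr ≫ ι.hom) ⊗ₘ 𝟙 A) ≫ T := by
          rw [← Category.assoc, swap, Category.assoc]
      _ = (𝟙 N ⊗ₘ b) ≫ u ≫ T := by rw [k5]
      _ = (𝟙 N ⊗ₘ b) ≫ T ≫ a := by rw [k3]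
      _ = ((𝟙 N ⊗ₘ b) ≫ T) ≫ a := by rw [← Category.assoc]
end

section
/- In any pre-Elgot category with distinguished object N and isomorphism ι : I ⨿ N ⟶ N, the pair (N, ι⁻¹) is a weakly final natural numbers coalgebra: for every morphism β : A ⟶ I ⨿ A there exists h : A ⟶ N with β ≫ (1_I ⨿ h) = h ≫ ι⁻¹ (equivalently, β ≫ (1_I ⨿ h) ≫ ι = h). -/
open CategoryTheory CategoryTheory.Limits CategoryTheory.MonoidalCategory

universe v u

attribute [local simp] coprod.inl_desc coprod.inr_desc coprod.inl_desc_assoc coprod.inr_desc_assoc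

section AuxTrace

variable {C : Type u} [Category.{v} C] [HasBinaryCoproducts C]

/-- yanking-based computation: the trace of `desc 𝟙 inl` is the codiagonal -/
lemma aux_codiag (Tr : ∀ (A B X : C), (A ⨿ X ⟶ B ⨿ X) → (A ⟶ B))
    (tr3 : ∀ (A A' B B' X : C) (g : A' ⟶ A) (f : A ⨿ X ⟶ B ⨿ X) (h : B ⟶ B'),
      g ≫ Tr A B X f ≫ h = Tr A' B' X (coprod.map g (𝟙 X) ≫ f ≫ coprod.map h (𝟙 X)))
    (tr4 : ∀ (A B D X : C) (f : A ⨿ X ⟶ B ⨿ X),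
      coprod.map (𝟙 D) (Tr A B X f) = Tr (D ⨿ A) (D ⨿ B) X
        ((coprod.associator D A X).hom ≫ coprod.map (𝟙 D) f ≫ (coprod.associator D B X).inv))
    (tr6 : ∀ A : C, Tr A A A (coprod.braiding A A).hom = 𝟙 A)
    (B : C) :
    Tr (B ⨿ B) B B (coprod.desc (𝟙 (B ⨿ B)) coprod.inl) = coprod.desc (𝟙 B) (𝟙 B) := by
  have hb : coprod.desc (𝟙 (B ⨿ B)) (coprod.inl : B ⟶ B ⨿ B) =
      coprod.map (𝟙 (B ⨿ B)) (𝟙 B) ≫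
        ((coprod.associator B B B).hom ≫ coprod.map (𝟙 B) (coprod.braiding B B).hom ≫
          (coprod.associator B B B).inv) ≫
        coprod.map (coprod.desc (𝟙 B) (𝟙 B)) (𝟙 B) := by
    apply coprod.hom_ext
    · apply coprod.hom_ext <;> simp [coprod.associator, coprod.braiding]
    · simp [coprod.associator, coprod.braiding]
  rw [hb, ← tr3, ← tr4, tr6]
  simp

lemma aux_onepass (Tr : ∀ (A B X : C), (A ⨿ X ⟶ B ⨿ X) → (A ⟶ B))
    (tr3 : ∀ (A A' B B' X : C) (g : A' ⟶ A) (f : A ⨿ X ⟶ B ⨿ X) (h : B ⟶ B'),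
      g ≫ Tr A B X f ≫ h = Tr A' B' X (coprod.map g (𝟙 X) ≫ f ≫ coprod.map h (𝟙 X)))
    (tr5 : ∀ (A B X Y : C) (h : X ⟶ Y) (f : A ⨿ Y ⟶ B ⨿ X),
      Tr A B X (coprod.map (𝟙 A) h ≫ f) = Tr A B Y (f ≫ coprod.map (𝟙 B) h))
    (hcodiag : ∀ B : C,
      Tr (B ⨿ B) B B (coprod.desc (𝟙 (B ⨿ B)) coprod.inl) = coprod.desc (𝟙 B) (𝟙 B))
    {A B X : C} (p : A ⟶ B ⨿ X) (q : X ⟶ B) :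
    Tr A B X (coprod.desc p (q ≫ coprod.inl)) = p ≫ coprod.desc (𝟙 B) q := by
  have h1 : coprod.desc p (q ≫ coprod.inl) =
      coprod.map (𝟙 A) q ≫ coprod.desc p coprod.inl := by
    apply coprod.hom_ext <;> simp
  have h2 : (coprod.desc p (coprod.inl : B ⟶ B ⨿ X)) ≫ coprod.map (𝟙 B) q =
      coprod.map (p ≫ coprod.map (𝟙 B) q) (𝟙 B) ≫
        coprod.desc (𝟙 (B ⨿ B)) coprod.inl ≫ coprod.map (𝟙 B) (𝟙 B) := by
    apply coprod.hom_ext <;> simp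
  rw [h1, tr5, h2, ← tr3, hcodiag]
  have h3 : coprod.map (𝟙 B) q ≫ coprod.desc (𝟙 B) (𝟙 B) = coprod.desc (𝟙 B) q := by
    apply coprod.hom_ext <;> simp
  rw [Category.comp_id, Category.assoc, h3]

lemma aux_entry_unfold (Tr : ∀ (A B X : C), (A ⨿ X ⟶ B ⨿ X) → (A ⟶ B))
    (tr2 : ∀ (A B X Y : C) (f : A ⨿ (X ⨿ Y) ⟶ B ⨿ (X ⨿ Y)),
      Tr A B (X ⨿ Y) f = Tr A B X (Tr (A ⨿ X) (B ⨿ X) Y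
        ((coprod.associator A X Y).hom ≫ f ≫ (coprod.associator B X Y).inv)))
    (tr5 : ∀ (A B X Y : C) (h : X ⟶ Y) (f : A ⨿ Y ⟶ B ⨿ X),
      Tr A B X (coprod.map (𝟙 A) h ≫ f) = Tr A B Y (f ≫ coprod.map (𝟙 B) h))
    (honepass : ∀ {A B X : C} (p : A ⟶ B ⨿ X) (q : X ⟶ B),
      Tr A B X (coprod.desc p (q ≫ coprod.inl)) = p ≫ coprod.desc (𝟙 B) q)
    {A B X : C} (g : A ⟶ B ⨿ X) (k : X ⟶ B ⨿ X) :
    Tr A B X (coprod.desc g k) =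
      Tr A B X (coprod.desc (g ≫ coprod.desc coprod.inl k) k) := by
  set w : B ⨿ X ⟶ (B ⨿ X) ⨿ B :=
    coprod.desc coprod.inr (coprod.inr ≫ coprod.inl) with hw
  set K : B ⨿ X ⟶ (B ⨿ X) ⨿ B :=
    coprod.desc (coprod.inl ≫ coprod.inl) (k ≫ w) with hK
  -- step 1: slide k around the loop
  have s1 : coprod.desc g k =
      coprod.map (𝟙 A) k ≫ coprod.desc g (𝟙 (B ⨿ X)) := by
    apply coprod.hom_ext <;> simp
  set G : A ⨿ (B ⨿ X) ⟶ B ⨿ (B ⨿ X) :=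
    coprod.desc g (𝟙 (B ⨿ X)) ≫ coprod.map (𝟙 B) k with hG
  have s2 : Tr A B X (coprod.desc g k) = Tr A B (B ⨿ X) G := by
    rw [s1, tr5]
  -- step 2: braid the loop object to X ⨿ B
  set f3 : A ⨿ (X ⨿ B) ⟶ B ⨿ (B ⨿ X) :=
    coprod.map (𝟙 A) (coprod.braiding X B).hom ≫ G with hf3
  have s3a : coprod.map (𝟙 A) (coprod.braiding B X).hom ≫ f3 = G := by
    apply coprod.hom_ext <;> simp [hf3, coprod.braiding]
  set G' : A ⨿ (X ⨿ B) ⟶ B ⨿ (X ⨿ B) :=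
    f3 ≫ coprod.map (𝟙 B) (coprod.braiding B X).hom with hG'
  have s3 : Tr A B (B ⨿ X) G = Tr A B (X ⨿ B) G' := by
    rw [← s3a, tr5]
  -- step 3: vanishing
  have s4 : Tr A B (X ⨿ B) G' = Tr A B X (Tr (A ⨿ X) (B ⨿ X) B
      ((coprod.associator A X B).hom ≫ G' ≫ (coprod.associator B X B).inv)) := tr2 _ _ _ _ _
  -- step 4: compute the inner body
  have s5 : (coprod.associator A X B).hom ≫ G' ≫ (coprod.associator B X B).inv =
      coprod.desc (coprod.desc (g ≫ K) (k ≫ w)) ((coprod.inl : B ⟶ B ⨿ X) ≫ coprod.inl) := by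
    apply coprod.hom_ext
    · apply coprod.hom_ext <;>
        simp [hG', hf3, hG, hK, hw, coprod.associator, coprod.braiding]
    · simp [hG', hf3, hG, hK, hw, coprod.associator, coprod.braiding]
  -- step 5: one-pass on the inner trace
  have s6 : Tr (A ⨿ X) (B ⨿ X) B
      ((coprod.associator A X B).hom ≫ G' ≫ (coprod.associator B X B).inv) =
      coprod.desc (g ≫ K) (k ≫ w) ≫ coprod.desc (𝟙 (B ⨿ X)) coprod.inl := by
    rw [s5]; exact honepass _ _
  have s7 : coprod.desc (g ≫ K) (k ≫ w) ≫ coprod.desc (𝟙 (B ⨿ X)) coprod.inl =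
      coprod.desc (g ≫ coprod.desc coprod.inl k) k := by
    have hwid : w ≫ coprod.desc (𝟙 (B ⨿ X)) coprod.inl = 𝟙 (B ⨿ X) := by
      apply coprod.hom_ext <;> simp [hw]
    have hKid : K ≫ coprod.desc (𝟙 (B ⨿ X)) coprod.inl = coprod.desc coprod.inl k := by
      apply coprod.hom_ext <;> simp [hK, Category.assoc, hwid]
    apply coprod.hom_ext <;> simp [Category.assoc, hwid, hKid]
  rw [s2, s3, s4, s6, s7]

lemma aux_fixpoint (Tr : ∀ (A B X : C), (A ⨿ X ⟶ B ⨿ X) → (A ⟶ B))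
    (tr3 : ∀ (A A' B B' X : C) (g : A' ⟶ A) (f : A ⨿ X ⟶ B ⨿ X) (h : B ⟶ B'),
      g ≫ Tr A B X f ≫ h = Tr A' B' X (coprod.map g (𝟙 X) ≫ f ≫ coprod.map h (𝟙 X)))
    (tr4 : ∀ (A B D X : C) (f : A ⨿ X ⟶ B ⨿ X),
      coprod.map (𝟙 D) (Tr A B X f) = Tr (D ⨿ A) (D ⨿ B) X
        ((coprod.associator D A X).hom ≫ coprod.map (𝟙 D) f ≫ (coprod.associator D B X).inv))
    (hentry : ∀ {A B X : C} (g : A ⟶ B ⨿ X) (k : X ⟶ B ⨿ X),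
      Tr A B X (coprod.desc g k) =
        Tr A B X (coprod.desc (g ≫ coprod.desc coprod.inl k) k))
    {B X : C} (k : X ⟶ B ⨿ X) :
    Tr X B X (coprod.desc k k) =
      k ≫ coprod.desc (𝟙 B) (Tr X B X (coprod.desc k k)) := by
  have e1 : coprod.map k (𝟙 X) ≫
      ((coprod.associator B X X).hom ≫ coprod.map (𝟙 B) (coprod.desc k k) ≫
        (coprod.associator B B X).inv) ≫ coprod.map (coprod.desc (𝟙 B) (𝟙 B)) (𝟙 X) =
      coprod.desc (k ≫ coprod.desc coprod.inl k) k := by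
    apply coprod.hom_ext <;> simp [coprod.associator]
  have e2 : coprod.map (𝟙 B) (Tr X B X (coprod.desc k k)) ≫ coprod.desc (𝟙 B) (𝟙 B) =
      coprod.desc (𝟙 B) (Tr X B X (coprod.desc k k)) := by
    apply coprod.hom_ext <;> simp
  calc Tr X B X (coprod.desc k k)
      = Tr X B X (coprod.desc (k ≫ coprod.desc coprod.inl k) k) := hentry k k
    _ = Tr X B X (coprod.map k (𝟙 X) ≫
          ((coprod.associator B X X).hom ≫ coprod.map (𝟙 B) (coprod.desc k k) ≫
            (coprod.associator B B X).inv) ≫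
          coprod.map (coprod.desc (𝟙 B) (𝟙 B)) (𝟙 X)) := by rw [e1]
    _ = k ≫ Tr (B ⨿ X) (B ⨿ B) X
          ((coprod.associator B X X).hom ≫ coprod.map (𝟙 B) (coprod.desc k k) ≫
            (coprod.associator B B X).inv) ≫ coprod.desc (𝟙 B) (𝟙 B) := (tr3 _ _ _ _ _ _ _ _).symm
    _ = k ≫ coprod.map (𝟙 B) (Tr X B X (coprod.desc k k)) ≫ coprod.desc (𝟙 B) (𝟙 B) := by
          rw [← tr4]
    _ = k ≫ coprod.desc (𝟙 B) (Tr X B X (coprod.desc k k)) := by rw [e2]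

end AuxTrace

set_option maxHeartbeats 2000000

/-- In any pre-Elgot category (a distributive monoidal category with a trace on its
coproduct structure and an isomorphism `ι : I ⨿ N ≅ N`), the pair `(N, ι⁻¹)` is a weakly final natural numbers coalgebra:
for every `β : A ⟶ I ⨿ A` there is `h : A ⟶ N` with `β ≫ (1 ⨿ h) = h ≫ ι⁻¹`. -/
theorem preElgot_weaklyFinalCoalgebra {C : Type u} [Category.{v} C] [MonoidalCategory C]
    [HasBinaryCoproducts C] [HasInitial C]
    -- the right distributors: inverses of the canonical maps
    (δr : ∀ A B X : C, ((A ⊗ X) ⨿ (B ⊗ X)) ≅ ((A ⨿ B) ⊗ X))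
    (hδr : ∀ A B X : C, (δr A B X).hom =
      coprod.desc ((coprod.inl : A ⟶ A ⨿ B) ⊗ₘ 𝟙 X) ((coprod.inr : B ⟶ A ⨿ B) ⊗ₘ 𝟙 X))
    -- the left distributors: inverses of the canonical maps
    (δl : ∀ X A B : C, ((X ⊗ A) ⨿ (X ⊗ B)) ≅ (X ⊗ (A ⨿ B)))
    (hδl : ∀ X A B : C, (δl X A B).hom =
      coprod.desc (𝟙 X ⊗ₘ (coprod.inl : A ⟶ A ⨿ B)) (𝟙 X ⊗ₘ (coprod.inr : B ⟶ A ⨿ B)))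
    -- the annihilators: the maps from the initial object are isomorphisms
    (hannr : ∀ A : C, IsIso (initial.to (A ⊗ ⊥_ C)))
    (hannl : ∀ A : C, IsIso (initial.to ((⊥_ C) ⊗ A)))
    -- a trace on the coproduct structure
    (Tr : ∀ (A B X : C), (A ⨿ X ⟶ B ⨿ X) → (A ⟶ B))
    (tr1 : ∀ (A B : C) (f : A ⨿ ⊥_ C ⟶ B ⨿ ⊥_ C),
      Tr A B (⊥_ C) f = (coprod.rightUnitor A).inv ≫ f ≫ (coprod.rightUnitor B).hom)
    (tr2 : ∀ (A B X Y : C) (f : A ⨿ (X ⨿ Y) ⟶ B ⨿ (X ⨿ Y)),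
      Tr A B (X ⨿ Y) f = Tr A B X (Tr (A ⨿ X) (B ⨿ X) Y
        ((coprod.associator A X Y).hom ≫ f ≫ (coprod.associator B X Y).inv)))
    (tr3 : ∀ (A A' B B' X : C) (g : A' ⟶ A) (f : A ⨿ X ⟶ B ⨿ X) (h : B ⟶ B'),
      g ≫ Tr A B X f ≫ h = Tr A' B' X (coprod.map g (𝟙 X) ≫ f ≫ coprod.map h (𝟙 X)))
    (tr4 : ∀ (A B D X : C) (f : A ⨿ X ⟶ B ⨿ X),
      coprod.map (𝟙 D) (Tr A B X f) = Tr (D ⨿ A) (D ⨿ B) X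
        ((coprod.associator D A X).hom ≫ coprod.map (𝟙 D) f ≫ (coprod.associator D B X).inv))
    (tr5 : ∀ (A B X Y : C) (h : X ⟶ Y) (f : A ⨿ Y ⟶ B ⨿ X),
      Tr A B X (coprod.map (𝟙 A) h ≫ f) = Tr A B Y (f ≫ coprod.map (𝟙 B) h))
    (tr6 : ∀ A : C, Tr A A A (coprod.braiding A A).hom = 𝟙 A)
    -- the distinguished object and isomorphism
    {N : C} (ι : ((𝟙_ C) ⨿ N) ≅ N) :
    ∀ (A : C) (β : A ⟶ (𝟙_ C) ⨿ A), ∃ h : A ⟶ N,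
      β ≫ coprod.map (𝟙 (𝟙_ C)) h = h ≫ ι.inv := by
  intro A β
  set zero : 𝟙_ C ⟶ N := coprod.inl ≫ ι.hom with hzero
  set succ : N ⟶ N := coprod.inr ≫ ι.hom with hsucc
  set s : A ⊗ N ⟶ A ⊗ N := A ◁ succ with hs
  set u : A ⊗ N ⟶ N ⨿ (A ⊗ N) :=
    (β ▷ N) ≫ (δr (𝟙_ C) A N).inv ≫ coprod.map (λ_ N).hom (𝟙 (A ⊗ N)) with hu
  set stp : A ⊗ N ⟶ N ⨿ (A ⊗ N) := u ≫ coprod.map (𝟙 N) s with hstp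
  set strt : A ⟶ A ⊗ N := (ρ_ A).inv ≫ (A ◁ zero) with hstrt
  -- δr basic facts
  have hinl : ∀ (P Q R : C), ((coprod.inl : P ⟶ P ⨿ Q) ▷ R) ≫ (δr P Q R).inv = coprod.inl := by
    intro P Q R; rw [Iso.comp_inv_eq, hδr]; simp [tensorHom_id]
  have hinr : ∀ (P Q R : C), ((coprod.inr : Q ⟶ P ⨿ Q) ▷ R) ≫ (δr P Q R).inv = coprod.inr := by
    intro P Q R; rw [Iso.comp_inv_eq, hδr]; simp [tensorHom_id]
  -- F2 : start into u
  have F2 : strt ≫ u = β ≫ coprod.map zero strt := by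
    have hb : (A ◁ zero) ≫ (β ▷ N) = (β ▷ 𝟙_ C) ≫ ((𝟙_ C ⨿ A) ◁ zero) :=
      whisker_exchange β zero
    have hρ : (ρ_ A).inv ≫ (β ▷ 𝟙_ C) = β ≫ (ρ_ (𝟙_ C ⨿ A)).inv :=
      (rightUnitor_inv_naturality β).symm
    have hc : (ρ_ (𝟙_ C ⨿ A)).inv ≫ ((𝟙_ C ⨿ A) ◁ zero) ≫ (δr (𝟙_ C) A N).inv ≫
        coprod.map (λ_ N).hom (𝟙 (A ⊗ N)) = coprod.map zero strt := by
      apply coprod.hom_ext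
      · rw [rightUnitor_inv_naturality_assoc, ← whisker_exchange_assoc]
        slice_lhs 3 4 => rw [hinl]
        rw [coprod.inl_map, coprod.inl_map, leftUnitor_naturality_assoc, unitors_equal,
          Iso.inv_hom_id_assoc]
      · rw [rightUnitor_inv_naturality_assoc, ← whisker_exchange_assoc]
        slice_lhs 3 4 => rw [hinr]
        simp [hstrt]
    rw [hstrt, hu, Category.assoc, reassoc_of% hb, reassoc_of% hρ, hc]
  -- F3 : u commutes with the successor
  have comm : coprod.map ((𝟙_ C) ◁ succ) (A ◁ succ) ≫ (δr (𝟙_ C) A N).hom =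
      (δr (𝟙_ C) A N).hom ≫ ((𝟙_ C ⨿ A) ◁ succ) := by
    rw [hδr]
    apply coprod.hom_ext <;>
      simp only [coprod.inl_map_assoc, coprod.inr_map_assoc, coprod.inl_desc, coprod.inr_desc,
        coprod.inl_desc_assoc, coprod.inr_desc_assoc, tensorHom_id, Category.assoc,
        ← whisker_exchange]
  have h2 : ((𝟙_ C ⨿ A) ◁ succ) ≫ (δr (𝟙_ C) A N).inv =
      (δr (𝟙_ C) A N).inv ≫ coprod.map ((𝟙_ C) ◁ succ) (A ◁ succ) := by
    rw [Iso.comp_inv_eq, Category.assoc, comm, Iso.inv_hom_id_assoc]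
  have F3 : s ≫ u = u ≫ coprod.map succ s := by
    rw [hs, hu, whisker_exchange_assoc, reassoc_of% h2]
    simp only [Category.assoc, coprod.map_map, Category.id_comp, Category.comp_id,
      leftUnitor_naturality]
  -- the loop morphism
  set L : A ⊗ N ⟶ N := Tr (A ⊗ N) N (A ⊗ N) (coprod.desc stp stp) with hL
  -- F4 : the loop commutes with the successor
  have e1 : coprod.map s (𝟙 (A ⊗ N)) ≫ coprod.desc stp stp ≫ coprod.map (𝟙 N) (𝟙 (A ⊗ N)) =
      (coprod.map s (𝟙 (A ⊗ N)) ≫ coprod.desc u u) ≫ coprod.map (𝟙 N) s := by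
    apply coprod.hom_ext <;> simp [hstp]
  have e2 : coprod.map (𝟙 (A ⊗ N)) s ≫ (coprod.map s (𝟙 (A ⊗ N)) ≫ coprod.desc u u) =
      coprod.map (𝟙 (A ⊗ N)) (𝟙 (A ⊗ N)) ≫ coprod.desc stp stp ≫ coprod.map succ (𝟙 (A ⊗ N)) := by
    apply coprod.hom_ext <;> simp [hstp, F3, reassoc_of% F3]
  have F4 : s ≫ L = L ≫ succ := by
    have c1 := tr3 _ _ _ _ _ s (coprod.desc stp stp) (𝟙 N)
    have c4 := tr3 _ _ _ _ _ (𝟙 (A ⊗ N)) (coprod.desc stp stp) succ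
    have c3 := (tr5 _ _ _ _ s (coprod.map s (𝟙 (A ⊗ N)) ≫ coprod.desc u u)).symm
    calc s ≫ L = s ≫ Tr (A ⊗ N) N (A ⊗ N) (coprod.desc stp stp) ≫ 𝟙 N := by
          rw [Category.comp_id, hL]
      _ = Tr (A ⊗ N) N (A ⊗ N) (coprod.map s (𝟙 (A ⊗ N)) ≫ coprod.desc stp stp ≫
            coprod.map (𝟙 N) (𝟙 (A ⊗ N))) := c1
      _ = Tr (A ⊗ N) N (A ⊗ N) ((coprod.map s (𝟙 (A ⊗ N)) ≫ coprod.desc u u) ≫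
            coprod.map (𝟙 N) s) := by rw [e1]
      _ = Tr (A ⊗ N) N (A ⊗ N) (coprod.map (𝟙 (A ⊗ N)) s ≫
            (coprod.map s (𝟙 (A ⊗ N)) ≫ coprod.desc u u)) := c3
      _ = Tr (A ⊗ N) N (A ⊗ N) (coprod.map (𝟙 (A ⊗ N)) (𝟙 (A ⊗ N)) ≫ coprod.desc stp stp ≫
            coprod.map succ (𝟙 (A ⊗ N))) := by rw [e2]
      _ = 𝟙 (A ⊗ N) ≫ Tr (A ⊗ N) N (A ⊗ N) (coprod.desc stp stp) ≫ succ := c4.symm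
      _ = L ≫ succ := by rw [Category.id_comp, hL]
  -- F5 : the fixpoint property of the loop
  have F5 : L = stp ≫ coprod.desc (𝟙 N) L := by
    rw [hL]
    exact aux_fixpoint Tr tr3 tr4
      (fun g k => aux_entry_unfold Tr tr2 tr5
        (fun p q => aux_onepass Tr tr3 tr5 (aux_codiag Tr tr3 tr4 tr6) p q) g k) stp
  -- assembly
  refine ⟨strt ≫ L, ?_⟩
  have hh : strt ≫ L = β ≫ coprod.desc zero ((strt ≫ L) ≫ succ) := by
    conv_lhs => rw [F5]
    rw [hstp, ← Category.assoc, ← Category.assoc, F2, Category.assoc, Category.assoc]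
    congr 1
    apply coprod.hom_ext <;> simp [F4]
  have hdesc : coprod.map (𝟙 (𝟙_ C)) (strt ≫ L) ≫ ι.hom =
      coprod.desc zero ((strt ≫ L) ≫ succ) := by
    apply coprod.hom_ext <;> simp [hzero, hsucc]
  rw [Iso.eq_comp_inv, Category.assoc, hdesc]
  exact hh.symm
end

section
/- Let C be a category with binary coproducts and an initial object, equipped with a monoidal structure (⊗, I) that distributes over coproducts. Suppose ι : I ⨿ N ⟶ N is an isomorphism, set z = inl ≫ ι and s = inr ≫ ι, and suppose that (N, z, s) is a weak left natural numbers object and that (N, ι⁻¹) is a weakly final natural numbers coalgebra. Then every partial recursive function is representable in C relative to (N, z, s): for every n and every partial recursive f : ℕⁿ →. ℕ there exists F : N^{⊗n} ⟶ N such that f(k₁, …, kₙ) = k implies that the composite of k₁̲ ⊗ ⋯ ⊗ kₙ̲ with F equals k̲ (modulo the canonical coherence isomorphism I ≅ I^{⊗n}). -/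
open CategoryTheory CategoryTheory.Limits CategoryTheory.MonoidalCategory

universe v u

/-- The `n`-fold tensor power `X^{⊗n}` of an object, associated to the left. -/
def tpow (C : Type u) [Category.{v} C] [MonoidalCategory C] (X : C) : ℕ → C
  | 0 => 𝟙_ C
  | n + 1 => tpow C X n ⊗ X

/-- The canonical coherence isomorphism `I ≅ I^{⊗n}`. -/
def unitPow (C : Type u) [Category.{v} C] [MonoidalCategory C] :
    ∀ n : ℕ, (𝟙_ C) ≅ tpow C (𝟙_ C) n
  | 0 => Iso.refl _
  | n + 1 => unitPow C n ≪≫ (ρ_ (tpow C (𝟙_ C) n)).symm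

/-- The tensor `k₁̲ ⊗ ⋯ ⊗ kₙ̲ : I^{⊗n} ⟶ N^{⊗n}` of a tuple of numerals. -/
def numTensor {C : Type u} [Category.{v} C] [MonoidalCategory C] {N : C}
    (z : 𝟙_ C ⟶ N) (s : N ⟶ N) : ∀ {n : ℕ}, (Fin n → ℕ) → (tpow C (𝟙_ C) n ⟶ tpow C N n)
  | 0, _ => 𝟙 _
  | n + 1, k => numTensor z s (fun i => k i.castSucc) ⊗ₘ numeral z s (k (Fin.last n))

namespace PlotkinAux
set_option linter.unusedSectionVars false
noncomputable section

section Point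

variable {C : Type u} [Category.{v} C] [MonoidalCategory C]

/-- pairing of points -/
def ppair {X Y : C} (p : 𝟙_ C ⟶ X) (q : 𝟙_ C ⟶ Y) : 𝟙_ C ⟶ X ⊗ Y :=
  (λ_ (𝟙_ C)).inv ≫ (p ⊗ₘ q)

theorem ppair_comp {X Y X' Y' : C} (p : 𝟙_ C ⟶ X) (q : 𝟙_ C ⟶ Y)
    (f : X ⟶ X') (g : Y ⟶ Y') : ppair p q ≫ (f ⊗ₘ g) = ppair (p ≫ f) (q ≫ g) := by
  simp [ppair, tensorHom_comp_tensorHom]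

theorem ppair_id_r {X : C} (p : 𝟙_ C ⟶ X) : ppair p (𝟙 (𝟙_ C)) ≫ (ρ_ X).hom = p := by
  simp only [ppair, MonoidalCategory.tensorHom_def, Category.assoc]
  simp [MonoidalCategory.unitors_inv_equal]

theorem ppair_id_l {Y : C} (q : 𝟙_ C ⟶ Y) : ppair (𝟙 (𝟙_ C)) q ≫ (λ_ Y).hom = q := by
  simp [ppair, MonoidalCategory.tensorHom_def]

theorem ppair_assoc {X Y Z : C} (p : 𝟙_ C ⟶ X) (q : 𝟙_ C ⟶ Y) (r : 𝟙_ C ⟶ Z) :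
    ppair (ppair p q) r ≫ (α_ X Y Z).hom = ppair p (ppair q r) := by
  simp only [ppair, Category.assoc]
  have h : ((λ_ (𝟙_ C)).inv ⊗ₘ 𝟙 (𝟙_ C)) ≫ (α_ (𝟙_ C) (𝟙_ C) (𝟙_ C)).hom
      = 𝟙 (𝟙_ C) ⊗ₘ (λ_ (𝟙_ C)).inv := by monoidal_coherence
  calc (λ_ (𝟙_ C)).inv ≫ ((λ_ (𝟙_ C)).inv ≫ (p ⊗ₘ q) ⊗ₘ r) ≫ (α_ X Y Z).hom
      = (λ_ (𝟙_ C)).inv ≫ (((λ_ (𝟙_ C)).inv ⊗ₘ 𝟙 (𝟙_ C)) ≫ ((p ⊗ₘ q) ⊗ₘ r)) ≫ (α_ X Y Z).hom := by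
        rw [tensorHom_comp_tensorHom]; simp
    _ = (λ_ (𝟙_ C)).inv ≫ ((λ_ (𝟙_ C)).inv ⊗ₘ 𝟙 (𝟙_ C)) ≫ (α_ (𝟙_ C) (𝟙_ C) (𝟙_ C)).hom ≫ (p ⊗ₘ q ⊗ₘ r) := by
        simp only [Category.assoc]; rw [associator_naturality]
    _ = (λ_ (𝟙_ C)).inv ≫ (𝟙 (𝟙_ C) ⊗ₘ (λ_ (𝟙_ C)).inv) ≫ (p ⊗ₘ q ⊗ₘ r) := by rw [reassoc_of% h]
    _ = (λ_ (𝟙_ C)).inv ≫ (p ⊗ₘ (λ_ (𝟙_ C)).inv ≫ (q ⊗ₘ r)) := by rw [tensorHom_comp_tensorHom]; simp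

theorem ppair_assoc_inv {X Y Z : C} (p : 𝟙_ C ⟶ X) (q : 𝟙_ C ⟶ Y) (r : 𝟙_ C ⟶ Z) :
    ppair p (ppair q r) ≫ (α_ X Y Z).inv = ppair (ppair p q) r := by
  rw [← ppair_assoc]; simp

theorem pt_runitor_inv {X : C} (p : 𝟙_ C ⟶ X) :
    p ≫ (ρ_ X).inv = ppair p (𝟙 (𝟙_ C)) := by
  rw [rightUnitor_inv_naturality, ppair, MonoidalCategory.unitors_inv_equal, tensorHom_def']
  simp

theorem pt_lunitor_inv {Y : C} (q : 𝟙_ C ⟶ Y) :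
    q ≫ (λ_ Y).inv = ppair (𝟙 (𝟙_ C)) q := by
  rw [leftUnitor_inv_naturality, ppair, MonoidalCategory.tensorHom_def]
  simp

/-- iterate an endomorphism -/
def itn {A : C} (a : A ⟶ A) : ℕ → (A ⟶ A)
  | 0 => 𝟙 A
  | m + 1 => itn a m ≫ a

theorem itn_id (A : C) : ∀ m, itn (𝟙 A) m = 𝟙 A
  | 0 => rfl
  | m + 1 => by rw [itn, itn_id A m]; simp

theorem itn_tensor {A B : C} (a : A ⟶ A) (b : B ⟶ B) :
    ∀ m, itn (a ⊗ₘ b) m = itn a m ⊗ₘ itn b m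
  | 0 => by simp [itn, id_tensorHom_id]
  | m + 1 => by rw [itn, itn_tensor a b m, itn, itn, tensorHom_comp_tensorHom]

end Point

section Main

variable {C : Type u} [Category.{v} C] [MonoidalCategory C]
  [HasBinaryCoproducts C] [HasInitial C] {N : C}

variable (ι : ((𝟙_ C) ⨿ N) ≅ N)

/-- zero -/
def nz : 𝟙_ C ⟶ N := coprod.inl ≫ ι.hom
/-- successor -/
def ns : N ⟶ N := coprod.inr ≫ ι.hom
/-- numeral -/
def num (m : ℕ) : 𝟙_ C ⟶ N := numeral (nz ι) (ns ι) m
/-- point of a tensor power given by a tuple of numerals -/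
def Pt {n : ℕ} (k : Fin n → ℕ) : 𝟙_ C ⟶ tpow C N n :=
  (unitPow C n).hom ≫ numTensor (nz ι) (ns ι) k

theorem num_zero : num ι 0 = nz ι := rfl
theorem num_succ (m : ℕ) : num ι (m + 1) = num ι m ≫ ns ι := rfl

theorem nz_itn (m : ℕ) : nz ι ≫ itn (ns ι) m = num ι m := by
  induction m with
  | zero => simp [itn, num_zero]
  | succ m IH => rw [itn, ← Category.assoc, IH, num_succ]

theorem Pt_zero (k : Fin 0 → ℕ) : Pt ι k = 𝟙 (𝟙_ C) := by
  simp [Pt, unitPow, numTensor]; exact Category.comp_id _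

theorem Pt_succ {n : ℕ} (k : Fin (n + 1) → ℕ) :
    Pt ι k = ppair (Pt ι fun i => k i.castSucc) (num ι (k (Fin.last n))) := by
  show (unitPow C n ≪≫ (ρ_ _).symm).hom ≫
      (numTensor (nz ι) (ns ι) (fun i => k i.castSucc) ⊗ₘ numeral (nz ι) (ns ι) (k (Fin.last n)))
      = _
  rw [Iso.trans_hom, Iso.symm_hom, pt_runitor_inv, ppair_comp]
  simp [Pt, ppair, num]

theorem Pt_snoc {n : ℕ} (q : Fin n → ℕ) (a : ℕ) :
    Pt ι (Fin.snoc q a) = ppair (Pt ι q) (num ι a) := by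
  rw [Pt_succ]
  simp [Fin.snoc_castSucc, Fin.snoc_last]; rfl

variable (hnno : ∀ (A B : C) (b : B ⟶ A) (a : A ⟶ A), ∃ h : N ⊗ B ⟶ A,
      ((coprod.inl ≫ ι.hom) ⊗ₘ 𝟙 B) ≫ h = (λ_ B).hom ≫ b ∧
      ((coprod.inr ≫ ι.hom) ⊗ₘ 𝟙 B) ≫ h = h ≫ a)

include hnno in
theorem iter {A B : C} (b : B ⟶ A) (a : A ⟶ A) :
    ∃ h : N ⊗ B ⟶ A, ∀ (m : ℕ) (x : 𝟙_ C ⟶ B),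
      ppair (num ι m) x ≫ h = x ≫ b ≫ itn a m := by
  obtain ⟨h, h0, h1⟩ := hnno A B b a
  refine ⟨h, fun m => ?_⟩
  induction m with
  | zero =>
    intro x
    have : ppair (num ι 0) x = (λ_ (𝟙_ C)).inv ≫ (𝟙 (𝟙_ C) ⊗ₘ x) ≫ ((coprod.inl ≫ ι.hom) ⊗ₘ 𝟙 B) := by
      rw [tensorHom_comp_tensorHom]; simp [ppair, num_zero, nz]
    rw [this, Category.assoc, Category.assoc, h0, id_tensorHom]
    rw [leftUnitor_naturality_assoc]
    simp [itn]
  | succ m IH =>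
    intro x
    have : ppair (num ι (m + 1)) x = ppair (num ι m) x ≫ ((coprod.inr ≫ ι.hom) ⊗ₘ 𝟙 B) := by
      rw [ppair_comp]; simp [num_succ, ns]
    rw [this, Category.assoc, h1, ← Category.assoc, IH x]
    simp [itn]

include hnno in
theorem iter1 {A : C} (b : 𝟙_ C ⟶ A) (a : A ⟶ A) :
    ∃ e : N ⟶ A, ∀ m, num ι m ≫ e = b ≫ itn a m := by
  obtain ⟨h, hh⟩ := iter ι hnno b a
  refine ⟨(ρ_ N).inv ≫ h, fun m => ?_⟩
  rw [← Category.assoc, pt_runitor_inv, hh m (𝟙 (𝟙_ C))]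
  simp

include hnno in
theorem epsN : ∃ e : N ⟶ 𝟙_ C, ∀ m, num ι m ≫ e = 𝟙 (𝟙_ C) := by
  obtain ⟨e, he⟩ := iter1 ι hnno (𝟙 (𝟙_ C)) (𝟙 (𝟙_ C))
  exact ⟨e, fun m => by rw [he m, itn_id]; simp⟩

include hnno in
theorem dupN : ∃ d : N ⟶ N ⊗ N, ∀ m, num ι m ≫ d = ppair (num ι m) (num ι m) := by
  obtain ⟨d, hd⟩ := iter1 ι hnno (ppair (nz ι) (nz ι)) (ns ι ⊗ₘ ns ι)
  refine ⟨d, fun m => ?_⟩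
  rw [hd m, itn_tensor, ppair_comp, nz_itn]

include hnno in
theorem swN (X : C) : ∃ w : N ⊗ X ⟶ X ⊗ N, ∀ (m : ℕ) (x : 𝟙_ C ⟶ X),
    ppair (num ι m) x ≫ w = ppair x (num ι m) := by
  obtain ⟨w, hw⟩ := iter ι hnno ((ρ_ X).inv ≫ (𝟙 X ⊗ₘ nz ι)) (𝟙 X ⊗ₘ ns ι)
  refine ⟨w, fun m x => ?_⟩
  rw [hw m x, itn_tensor, itn_id]
  simp only [Category.assoc]
  rw [tensorHom_comp_tensorHom, nz_itn, Category.id_comp]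
  rw [← Category.assoc, pt_runitor_inv, ppair_comp, Category.comp_id, Category.id_comp]

include hnno in
/-- swap a tensor power past `N`, on numeral points -/
theorem swT (n : ℕ) : ∃ w : tpow C N n ⊗ N ⟶ N ⊗ tpow C N n,
    ∀ (k : Fin n → ℕ) (m : ℕ), ppair (Pt ι k) (num ι m) ≫ w = ppair (num ι m) (Pt ι k) := by
  induction n with
  | zero =>
    refine ⟨(λ_ N).hom ≫ (ρ_ N).inv, fun k m => ?_⟩
    erw [Pt_zero, ← Category.assoc, ppair_id_l, pt_runitor_inv]; rfl
  | succ n IH =>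
    obtain ⟨wNN, hwNN⟩ := swN ι hnno N
    obtain ⟨w, hw⟩ := IH
    refine ⟨(α_ _ N N).hom ≫ (𝟙 _ ⊗ₘ wNN) ≫ (α_ _ N N).inv ≫ (w ⊗ₘ 𝟙 N) ≫ (α_ N _ N).hom,
      fun k m => ?_⟩
    rw [Pt_succ ι k]
    erw [← Category.assoc, ppair_assoc, ← Category.assoc, ppair_comp, Category.comp_id,
      hwNN, ← Category.assoc, ppair_assoc_inv, ← Category.assoc, ppair_comp,
      Category.comp_id, hw, ppair_assoc, ← Pt_succ]; rfl

include hnno in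
theorem epsT (n : ℕ) : ∃ e : tpow C N n ⟶ 𝟙_ C, ∀ k : Fin n → ℕ, Pt ι k ≫ e = 𝟙 (𝟙_ C) := by
  induction n with
  | zero => exact ⟨𝟙 _, fun k => by erw [Pt_zero]; exact Category.id_comp _⟩
  | succ n IH =>
    obtain ⟨eN, heN⟩ := epsN ι hnno
    obtain ⟨e, he⟩ := IH
    refine ⟨(e ⊗ₘ eN) ≫ (λ_ (𝟙_ C)).hom, fun k => ?_⟩
    erw [Pt_succ, ← Category.assoc, ppair_comp, he, heN, ppair_id_l]

include hnno in
theorem dupT (n : ℕ) : ∃ d : tpow C N n ⟶ tpow C N n ⊗ tpow C N n,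
    ∀ k : Fin n → ℕ, Pt ι k ≫ d = ppair (Pt ι k) (Pt ι k) := by
  induction n with
  | zero =>
    refine ⟨(λ_ (𝟙_ C)).inv, fun k => ?_⟩
    rw [Pt_zero]
    have : (λ_ (𝟙_ C)).inv = ppair (𝟙 (𝟙_ C)) (𝟙 (𝟙_ C)) := by
      rw [ppair, id_tensorHom_id, Category.comp_id]
    erw [Category.id_comp]
    exact this
  | succ n IH =>
    obtain ⟨dN, hdN⟩ := dupN ι hnno
    obtain ⟨d, hd⟩ := IH
    obtain ⟨w, hw⟩ := swT ι hnno n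
    refine ⟨(d ⊗ₘ dN) ≫ (α_ (tpow C N n) (tpow C N n) (N ⊗ N)).hom ≫
      (𝟙 (tpow C N n) ⊗ₘ (α_ (tpow C N n) N N).inv) ≫
      (𝟙 (tpow C N n) ⊗ₘ (w ⊗ₘ 𝟙 N)) ≫ (𝟙 (tpow C N n) ⊗ₘ (α_ N (tpow C N n) N).hom) ≫
      (α_ (tpow C N n) N ((tpow C N n) ⊗ N)).inv, fun k => ?_⟩
    rw [Pt_succ ι k]
    erw [← Category.assoc, ppair_comp, hd, hdN, ← Category.assoc, ppair_assoc,
      ← Category.assoc, ppair_comp, Category.comp_id, ppair_assoc_inv,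
      ← Category.assoc, ppair_comp, Category.comp_id, ppair_comp, hw, Category.comp_id,
      ← Category.assoc, ppair_comp, Category.comp_id, ppair_assoc, ppair_assoc_inv]; rfl

include hnno in
theorem projT (n : ℕ) (i : Fin n) : ∃ p : tpow C N n ⟶ N,
    ∀ k : Fin n → ℕ, Pt ι k ≫ p = num ι (k i) := by
  induction n with
  | zero => exact i.elim0
  | succ n IH =>
    obtain ⟨eN, heN⟩ := epsN ι hnno
    obtain ⟨e, he⟩ := epsT ι hnno n
    induction i using Fin.lastCases with
    | last =>
      refine ⟨(e ⊗ₘ 𝟙 N) ≫ (λ_ N).hom, fun k => ?_⟩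
      erw [Pt_succ, ← Category.assoc, ppair_comp, he, Category.comp_id, ppair_id_l]
    | cast j =>
      obtain ⟨pj, hpj⟩ := IH j
      refine ⟨(pj ⊗ₘ eN) ≫ (ρ_ N).hom, fun k => ?_⟩
      erw [Pt_succ, ← Category.assoc, ppair_comp, hpj, heN, ppair_id_r]

include hnno in
theorem tupleMap {m n : ℕ} (g : Fin m → (Fin n → ℕ) → Part ℕ)
    (F : Fin m → (tpow C N n ⟶ N)) (hF : ∀ (i : Fin m) (k : Fin n → ℕ) (r : ℕ),
      r ∈ g i k → Pt ι k ≫ F i = num ι r) :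
    ∃ G : tpow C N n ⟶ tpow C N m, ∀ (k : Fin n → ℕ) (w : Fin m → ℕ),
      (∀ i, w i ∈ g i k) → Pt ι k ≫ G = Pt ι w := by
  induction m with
  | zero =>
    obtain ⟨e, he⟩ := epsT ι hnno n
    exact ⟨e, fun k w _ => by erw [he, Pt_zero]⟩
  | succ m IH =>
    obtain ⟨d, hd⟩ := dupT ι hnno n
    obtain ⟨G', hG'⟩ := IH (fun i => g i.castSucc) (fun i => F i.castSucc)
      (fun i => hF i.castSucc)
    refine ⟨d ≫ (G' ⊗ₘ F (Fin.last m)), fun k w hw => ?_⟩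
    erw [← Category.assoc, hd, ppair_comp, hG' k (fun i => w i.castSucc) (fun i => hw i.castSucc),
      hF (Fin.last m) k (w (Fin.last m)) (hw (Fin.last m)), ← Pt_succ]

include hnno in
theorem tupleMapT {m n : ℕ} (u : Fin m → (Fin n → ℕ) → ℕ)
    (F : Fin m → (tpow C N n ⟶ N)) (hF : ∀ (i : Fin m) (k : Fin n → ℕ),
      Pt ι k ≫ F i = num ι (u i k)) :
    ∃ G : tpow C N n ⟶ tpow C N m, ∀ k : Fin n → ℕ,
      Pt ι k ≫ G = Pt ι (fun i => u i k) := by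
  obtain ⟨G, hG⟩ := tupleMap ι hnno (fun i k => Part.some (u i k)) F
    (fun i k r hr => by rw [hF]; rw [Part.mem_some_iff] at hr; rw [hr])
  exact ⟨G, fun k => hG k (fun i => u i k) (fun i => Part.mem_some _)⟩

include hnno in
theorem reindex {m n : ℕ} (σ : Fin m → Fin n) :
    ∃ G : tpow C N n ⟶ tpow C N m, ∀ k : Fin n → ℕ, Pt ι k ≫ G = Pt ι (k ∘ σ) := by
  have hp := fun i : Fin m => projT ι hnno n (σ i)
  choose F hF using hp
  exact tupleMapT ι hnno (fun i k => k (σ i)) F (fun i k => hF i k)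


-- Vector helpers
theorem vec_get_cons {n : ℕ} (a : ℕ) (w : List.Vector ℕ n) :
    (a ::ᵥ w).get = Fin.cons a w.get := by
  funext i
  induction i using Fin.cases with
  | zero => simp
  | succ j => simp

theorem vec_ofFn_get {n : ℕ} (k : Fin n → ℕ) : (List.Vector.ofFn k).get = k :=
  funext fun j => List.Vector.get_ofFn k j

theorem vec_ofFn_cons {n : ℕ} (a : ℕ) (w : Fin n → ℕ) :
    List.Vector.ofFn (Fin.cons a w) = a ::ᵥ List.Vector.ofFn w := by
  have h1 : (a ::ᵥ List.Vector.ofFn w) = List.Vector.ofFn ((a ::ᵥ List.Vector.ofFn w).get) :=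
    (List.Vector.ofFn_get _).symm
  rw [h1, vec_get_cons, vec_ofFn_get]

theorem vec_tail_get {n : ℕ} (v : List.Vector ℕ (n + 1)) :
    v.tail.get = v.get ∘ Fin.succ :=
  funext fun j => List.Vector.get_tail_succ v j

include hnno in
theorem prim_rep : ∀ {n : ℕ} {f : List.Vector ℕ n → ℕ}, Nat.Primrec' f →
    ∃ F : tpow C N n ⟶ N, ∀ v : List.Vector ℕ n, Pt ι v.get ≫ F = num ι (f v) := by
  intro n f pf
  induction pf with
  | zero => exact ⟨nz ι, fun v => by erw [Pt_zero, Category.id_comp, num_zero]⟩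
  | succ =>
    obtain ⟨p, hp⟩ := projT ι hnno 1 0
    refine ⟨p ≫ ns ι, fun v => ?_⟩
    rw [← Category.assoc, hp, ← num_succ, List.Vector.get_zero]
  | get i =>
    obtain ⟨p, hp⟩ := projT ι hnno _ i
    exact ⟨p, fun v => hp v.get⟩
  | comp g _ _ hf hg =>
    obtain ⟨Ff, hFf⟩ := hf
    choose Fg hFg using hg
    obtain ⟨G, hG⟩ := tupleMapT ι hnno (fun i k => g i (List.Vector.ofFn k)) Fg
      (fun i k => by
        have h := hFg i (List.Vector.ofFn k)
        rwa [vec_ofFn_get] at h)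
    refine ⟨G ≫ Ff, fun v => ?_⟩
    rw [← Category.assoc, hG]
    have h2 := hFf (List.Vector.ofFn fun i => g i v)
    rw [vec_ofFn_get] at h2
    rw [show (fun i => g i (List.Vector.ofFn v.get)) = fun i => g i v by
      rw [List.Vector.ofFn_get]]
    exact h2
  | @prec n f g _ _ ihf ihg =>
    obtain ⟨Ff, hFf⟩ := ihf
    obtain ⟨Fg, hFg⟩ := ihg
    have hFf' : ∀ p : Fin n → ℕ, Pt ι p ≫ Ff = num ι (f (List.Vector.ofFn p)) := by
      intro p; have h := hFf (List.Vector.ofFn p); rwa [vec_ofFn_get] at h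
    have hFg' : ∀ p : Fin (n + 2) → ℕ, Pt ι p ≫ Fg = num ι (g (List.Vector.ofFn p)) := by
      intro p; have h := hFg (List.Vector.ofFn p); rwa [vec_ofFn_get] at h
    -- reorder σ : position of g's arguments inside the state
    set σ : Fin (n + 2) → Fin (n + 2) :=
      Fin.cons ((Fin.last n).castSucc) (Fin.cons (Fin.last (n + 1))
        (fun j : Fin n => j.castSucc.castSucc)) with hσ
    have hσc : ∀ (p : Fin n → ℕ) (y acc : ℕ),
        (Fin.snoc (Fin.snoc p y) acc : Fin (n + 2) → ℕ) ∘ σ = Fin.cons y (Fin.cons acc p) := by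
      intro p y acc
      funext i
      induction i using Fin.cases with
      | zero => simp [hσ]
      | succ j =>
        induction j using Fin.cases with
        | zero => simp [hσ]
        | succ l => simp [hσ]
    obtain ⟨Gσ, hGσ⟩ := reindex ι hnno σ
    -- the step morphism
    have hcomps : ∀ j : Fin n, ∃ P : tpow C N (n + 2) ⟶ N,
        ∀ k : Fin (n + 2) → ℕ, Pt ι k ≫ P = num ι (k j.castSucc.castSucc) :=
      fun j => projT ι hnno (n + 2) j.castSucc.castSucc
    choose Pj hPj using hcomps
    obtain ⟨Py0, hPy0⟩ := projT ι hnno (n + 2) ((Fin.last n).castSucc)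
    obtain ⟨a, ha⟩ := tupleMapT ι hnno
      (Fin.snoc (Fin.snoc (fun (j : Fin n) k => k j.castSucc.castSucc)
        (fun k => k ((Fin.last n).castSucc) + 1))
        (fun k => g (List.Vector.ofFn (k ∘ σ))))
      (Fin.snoc (Fin.snoc Pj (Py0 ≫ ns ι)) (Gσ ≫ Fg))
      (by
        intro i k
        induction i using Fin.lastCases with
        | last =>
          simp only [Fin.snoc_last]
          rw [← Category.assoc, hGσ, hFg']
        | cast i' =>
          induction i' using Fin.lastCases with
          | last =>
            simp only [Fin.snoc_castSucc, Fin.snoc_last]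
            rw [← Category.assoc, hPy0, ← num_succ]
          | cast j =>
            simp only [Fin.snoc_castSucc]
            exact hPj j k)
    have hstep : ∀ (p : Fin n → ℕ) (y acc : ℕ),
        Pt ι (Fin.snoc (Fin.snoc p y) acc) ≫ a =
        Pt ι (Fin.snoc (Fin.snoc p (y + 1))
          (g (List.Vector.ofFn (Fin.cons y (Fin.cons acc p))))) := by
      intro p y acc
      rw [ha]
      congr 1
      funext i
      induction i using Fin.lastCases with
      | last => simp [hσc p y acc]
      | cast i' =>
        induction i' using Fin.lastCases with
        | last => simp
        | cast j => simp
    -- the base morphism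
    have hcomps2 : ∀ j : Fin n, ∃ P : tpow C N n ⟶ N,
        ∀ k : Fin n → ℕ, Pt ι k ≫ P = num ι (k j) := fun j => projT ι hnno n j
    choose Qj hQj using hcomps2
    obtain ⟨e, he⟩ := epsT ι hnno n
    obtain ⟨b, hb⟩ := tupleMapT ι hnno
      (Fin.snoc (Fin.snoc (fun (j : Fin n) k => k j) (fun _ => 0))
        (fun k => f (List.Vector.ofFn k)))
      (Fin.snoc (Fin.snoc Qj (e ≫ nz ι)) Ff)
      (by
        intro i k
        induction i using Fin.lastCases with
        | last => simp only [Fin.snoc_last]; exact hFf' k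
        | cast i' =>
          induction i' using Fin.lastCases with
          | last =>
            simp only [Fin.snoc_castSucc, Fin.snoc_last]
            rw [← Category.assoc, he, Category.id_comp, num_zero]
          | cast j => simp only [Fin.snoc_castSucc]; exact hQj j k)
    have hb' : ∀ p : Fin n → ℕ,
        Pt ι p ≫ b = Pt ι (Fin.snoc (Fin.snoc p 0) (f (List.Vector.ofFn p))) := by
      intro p
      rw [hb]
      congr 1
      funext i
      induction i using Fin.lastCases with
      | last => simp
      | cast i' =>
        induction i' using Fin.lastCases with
        | last => simp
        | cast j => simp
    obtain ⟨h, hh⟩ := iter ι hnno b a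
    -- the loop invariant
    have loop : ∀ (y : ℕ) (p : Fin n → ℕ),
        Pt ι p ≫ b ≫ itn a y = Pt ι (Fin.snoc (Fin.snoc p y)
          (Nat.rec (f (List.Vector.ofFn p))
            (fun y IH => g (List.Vector.ofFn (Fin.cons y (Fin.cons IH p)))) y)) := by
      intro y p
      induction y with
      | zero => rw [itn, Category.comp_id, hb' p];rfl
      | succ y IH =>
        rw [itn, ← Category.assoc, ← Category.assoc] at *
        rw [IH, hstep]
    -- assemble
    set τ : Fin (n + 1) → Fin (n + 1) := Fin.snoc (fun j : Fin n => j.succ) 0 with hτ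
    obtain ⟨Gτ, hGτ⟩ := reindex ι hnno τ
    obtain ⟨w, hw⟩ := swT ι hnno n
    obtain ⟨pl, hpl⟩ := projT ι hnno (n + 2) (Fin.last (n + 1))
    refine ⟨Gτ ≫ w ≫ h ≫ pl, fun v => ?_⟩
    have hτc : v.get ∘ τ = Fin.snoc (v.get ∘ Fin.succ) (v.get 0) := by
      funext i
      induction i using Fin.lastCases with
      | last => simp [hτ]
      | cast j => simp [hτ]
    erw [← Category.assoc, hGτ, hτc, Pt_snoc, ← Category.assoc, ← Category.assoc, hw,
      Category.assoc, ← Category.assoc, hh, Category.assoc, ← Category.assoc, loop, hpl,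
      Fin.snoc_last]
    -- arithmetic: identify the recursions
    have hq : v.get ∘ Fin.succ = v.tail.get := (vec_tail_get v).symm
    have hhead : v.get 0 = v.head := List.Vector.get_zero v
    have hgoal : ∀ y : ℕ,
        (Nat.rec (f (List.Vector.ofFn v.tail.get))
          (fun y IH => g (List.Vector.ofFn (Fin.cons y (Fin.cons IH v.tail.get)))) y : ℕ)
        = Nat.rec (f v.tail) (fun y IH => g (y ::ᵥ IH ::ᵥ v.tail)) y := by
      intro y
      induction y with
      | zero => rw [List.Vector.ofFn_get]; rfl
      | succ y IH =>
        simp only [Nat.rec_add_one]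
        rw [IH, vec_ofFn_cons, vec_ofFn_cons, List.Vector.ofFn_get]
    rw [hq, hgoal (v.get 0), hhead]


theorem mem_mOfFn : ∀ {n : ℕ} (g : Fin n → Part ℕ) (w : List.Vector ℕ n),
    w ∈ List.Vector.mOfFn g → ∀ i, w.get i ∈ g i := by
  intro n
  induction n with
  | zero => intro g w hw i; exact i.elim0
  | succ n IH =>
    intro g w hw i
    rw [List.Vector.mOfFn] at hw
    simp only [bind, Part.mem_bind_iff, Part.pure_eq_some, Part.mem_some_iff] at hw
    obtain ⟨a, ha, v, hv, rfl⟩ := hw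
    induction i using Fin.cases with
    | zero => rwa [List.Vector.get_cons_zero]
    | succ j => rw [List.Vector.get_cons_succ]; exact IH _ v hv j

variable (δl : ∀ X A B : C, ((X ⊗ A) ⨿ (X ⊗ B)) ≅ (X ⊗ (A ⨿ B)))
variable (hδl : ∀ X A B : C, (δl X A B).hom =
      coprod.desc (𝟙 X ⊗ₘ (coprod.inl : A ⟶ A ⨿ B)) (𝟙 X ⊗ₘ (coprod.inr : B ⟶ A ⨿ B)))
variable (hcoalg : ∀ (A : C) (β : A ⟶ (𝟙_ C) ⨿ A), ∃ h : A ⟶ N,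
      β ≫ coprod.map (𝟙 (𝟙_ C)) h = h ≫ ι.inv)

include hδl in
theorem dist_point_inl {X : C} (p : 𝟙_ C ⟶ X) (x : 𝟙_ C ⟶ 𝟙_ C) :
    ppair p (x ≫ coprod.inl) ≫ (δl X (𝟙_ C) (𝟙_ C)).inv = ppair p x ≫ coprod.inl := by
  rw [Iso.comp_inv_eq, Category.assoc, hδl, coprod.inl_desc, ppair_comp, Category.comp_id]

include hδl in
theorem dist_point_inr {X : C} (p : 𝟙_ C ⟶ X) (x : 𝟙_ C ⟶ 𝟙_ C) :
    ppair p (x ≫ coprod.inr) ≫ (δl X (𝟙_ C) (𝟙_ C)).inv = ppair p x ≫ coprod.inr := by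
  rw [Iso.comp_inv_eq, Category.assoc, hδl, coprod.inr_desc, ppair_comp, Category.comp_id]

include hnno hδl hcoalg in
theorem rfind_rep {n : ℕ} (f : List.Vector ℕ (n + 1) → ℕ)
    (Ff : tpow C N (n + 1) ⟶ N)
    (hFf : ∀ v : List.Vector ℕ (n + 1), Pt ι v.get ≫ Ff = num ι (f v)) :
    ∃ F : tpow C N n ⟶ N, ∀ (v : List.Vector ℕ n) (m : ℕ),
      f (m ::ᵥ v) = 0 → (∀ j, j < m → f (j ::ᵥ v) ≠ 0) → Pt ι v.get ≫ F = num ι m := by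
  have hFf' : ∀ k : Fin (n + 1) → ℕ, Pt ι k ≫ Ff = num ι (f (List.Vector.ofFn k)) := by
    intro k; have h := hFf (List.Vector.ofFn k); rwa [vec_ofFn_get] at h
  obtain ⟨eN, heN⟩ := epsN ι hnno
  obtain ⟨eA, heA⟩ := epsT ι hnno (n + 1)
  obtain ⟨d, hd⟩ := dupT ι hnno (n + 1)
  -- increment first coordinate
  obtain ⟨p0, hp0⟩ := projT ι hnno (n + 1) 0
  have hcomps : ∀ j : Fin n, ∃ P : tpow C N (n + 1) ⟶ N,
      ∀ k : Fin (n + 1) → ℕ, Pt ι k ≫ P = num ι (k j.succ) :=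
    fun j => projT ι hnno (n + 1) j.succ
  choose Pj hPj using hcomps
  obtain ⟨inc, hinca⟩ := tupleMapT ι hnno
    (Fin.cons (fun k => k 0 + 1) (fun (j : Fin n) k => k j.succ))
    (Fin.cons (p0 ≫ ns ι) Pj)
    (by
      intro i k
      induction i using Fin.cases with
      | zero =>
        simp only [Fin.cons_zero]
        rw [← Category.assoc, hp0, ← num_succ]
      | succ j => simp only [Fin.cons_succ]; exact hPj j k)
  have hinc : ∀ (c : ℕ) (q : Fin n → ℕ),
      Pt ι (Fin.cons c q) ≫ inc = Pt ι (Fin.cons (c + 1) q) := by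
    intro c q
    rw [hinca]
    congr 1
    funext i
    induction i using Fin.cases with
    | zero => simp
    | succ j => simp
  -- test morphism
  set c : tpow C N (n + 1) ⟶ (𝟙_ C) ⨿ (𝟙_ C) :=
    Ff ≫ ι.inv ≫ coprod.map (𝟙 (𝟙_ C)) eN with hcdef
  have hc0 : ∀ k : Fin (n + 1) → ℕ, f (List.Vector.ofFn k) = 0 →
      Pt ι k ≫ c = coprod.inl := by
    intro k hk
    rw [hcdef, ← Category.assoc, hFf', hk, num_zero, nz]
    simp
  have hc1 : ∀ k : Fin (n + 1) → ℕ, f (List.Vector.ofFn k) ≠ 0 →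
      Pt ι k ≫ c = coprod.inr := by
    intro k hk
    obtain ⟨r, hr⟩ := Nat.exists_eq_succ_of_ne_zero hk
    rw [hcdef, ← Category.assoc, hFf', hr, num_succ, ns]
    simp only [Category.assoc, Iso.hom_inv_id_assoc]
    rw [coprod.inr_map, ← Category.assoc, heN, Category.id_comp]
  -- the coalgebra structure
  set β : tpow C N (n + 1) ⟶ (𝟙_ C) ⨿ tpow C N (n + 1) :=
    d ≫ (𝟙 _ ⊗ₘ c) ≫ (δl (tpow C N (n + 1)) (𝟙_ C) (𝟙_ C)).inv ≫
      coprod.map ((ρ_ _).hom ≫ eA) ((ρ_ _).hom ≫ inc) with hβdef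
  have hβ0 : ∀ k : Fin (n + 1) → ℕ, f (List.Vector.ofFn k) = 0 →
      Pt ι k ≫ β = coprod.inl := by
    intro k hk
    rw [hβdef, ← Category.assoc, hd, ← Category.assoc, ppair_comp, Category.comp_id, hc0 k hk,
      show (coprod.inl : 𝟙_ C ⟶ 𝟙_ C ⨿ 𝟙_ C) = 𝟙 _ ≫ coprod.inl by simp,
      ← Category.assoc, dist_point_inl δl hδl, Category.assoc, coprod.inl_map,
      ← Category.assoc, ← Category.assoc, ppair_id_r, heA, Category.id_comp]
  have hβ1 : ∀ (cc : ℕ) (q : Fin n → ℕ), f (List.Vector.ofFn (Fin.cons cc q)) ≠ 0 →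
      Pt ι (Fin.cons cc q) ≫ β = Pt ι (Fin.cons (cc + 1) q) ≫ coprod.inr := by
    intro cc q hk
    rw [hβdef, ← Category.assoc, hd, ← Category.assoc, ppair_comp, Category.comp_id, hc1 _ hk,
      show (coprod.inr : 𝟙_ C ⟶ 𝟙_ C ⨿ 𝟙_ C) = 𝟙 _ ≫ coprod.inr by simp,
      ← Category.assoc, dist_point_inr δl hδl, Category.assoc, coprod.inr_map,
      ← Category.assoc, ← Category.assoc, ppair_id_r, hinc]
  obtain ⟨H, hH⟩ := hcoalg _ β
  have key : ∀ (m cc : ℕ) (q : Fin n → ℕ),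
      f (List.Vector.ofFn (Fin.cons (cc + m) q)) = 0 →
      (∀ j, j < m → f (List.Vector.ofFn (Fin.cons (cc + j) q)) ≠ 0) →
      Pt ι (Fin.cons cc q) ≫ H = num ι m := by
    intro m
    induction m with
    | zero =>
      intro cc q h0 _
      simp only [Nat.add_zero] at h0
      have e1 : Pt ι (Fin.cons cc q) ≫ H ≫ ι.inv = coprod.inl := by
        rw [← hH, ← Category.assoc, hβ0 _ h0, coprod.inl_map, Category.id_comp]
      rw [← cancel_mono ι.inv]
      simp only [Category.assoc]
      rw [e1, num_zero, nz]
      simp only [Category.assoc, Iso.hom_inv_id, Category.comp_id]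
    | succ m IH =>
      intro cc q h0 hlt
      have hne : f (List.Vector.ofFn (Fin.cons cc q)) ≠ 0 := by
        have h := hlt 0 (Nat.succ_pos m)
        simpa only [Nat.add_zero] using h
      have e1 : Pt ι (Fin.cons cc q) ≫ H ≫ ι.inv
          = Pt ι (Fin.cons (cc + 1) q) ≫ H ≫ coprod.inr := by
        rw [← hH, ← Category.assoc, hβ1 cc q hne, Category.assoc, coprod.inr_map]
      have e3 : cc + 1 + m = cc + (m + 1) := by omega
      have h0' : f (List.Vector.ofFn (Fin.cons (cc + 1 + m) q)) = 0 := by rw [e3]; exact h0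
      have hlt' : ∀ j, j < m → f (List.Vector.ofFn (Fin.cons (cc + 1 + j) q)) ≠ 0 := by
        intro j hj
        have e4 : cc + 1 + j = cc + (j + 1) := by omega
        rw [e4]
        exact hlt (j + 1) (by omega)
      rw [← cancel_mono ι.inv]
      simp only [Category.assoc]
      rw [e1, ← Category.assoc, IH (cc + 1) q h0' hlt', num_succ, ns]
      simp only [Category.assoc, Iso.hom_inv_id, Category.comp_id]
  -- zero-insertion
  obtain ⟨e0, he0⟩ := epsT ι hnno n
  have hcomps2 : ∀ j : Fin n, ∃ P : tpow C N n ⟶ N,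
      ∀ k : Fin n → ℕ, Pt ι k ≫ P = num ι (k j) := fun j => projT ι hnno n j
  choose Qj hQj using hcomps2
  obtain ⟨b0, hb0a⟩ := tupleMapT ι hnno
    (Fin.cons (fun _ => 0) (fun (j : Fin n) k => k j))
    (Fin.cons (e0 ≫ nz ι) Qj)
    (by
      intro i k
      induction i using Fin.cases with
      | zero =>
        simp only [Fin.cons_zero]
        rw [← Category.assoc, he0, Category.id_comp, num_zero]
      | succ j => simp only [Fin.cons_succ]; exact hQj j k)
  have hb0 : ∀ q : Fin n → ℕ, Pt ι q ≫ b0 = Pt ι (Fin.cons 0 q) := by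
    intro q
    rw [hb0a]
    congr 1
    funext i
    induction i using Fin.cases with
    | zero => simp
    | succ j => simp
  refine ⟨b0 ≫ H, fun v m hm hlt => ?_⟩
  rw [← Category.assoc, hb0]
  have hofFn : ∀ j : ℕ, List.Vector.ofFn (Fin.cons j v.get) = j ::ᵥ v := by
    intro j
    rw [vec_ofFn_cons, List.Vector.ofFn_get]
  refine key m 0 v.get ?_ ?_
  · rw [Nat.zero_add, hofFn]; exact hm
  · intro j hj; rw [Nat.zero_add, hofFn]; exact hlt j hj


include hnno hδl hcoalg in
theorem part_rep : ∀ {n : ℕ} {f : List.Vector ℕ n →. ℕ}, Nat.Partrec' f →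
    ∃ F : tpow C N n ⟶ N, ∀ (v : List.Vector ℕ n) (m : ℕ), m ∈ f v →
      Pt ι v.get ≫ F = num ι m := by
  intro n f pf
  induction pf with
  | @prim n' f' hf =>
    obtain ⟨F, hF⟩ := prim_rep ι hnno hf
    refine ⟨F, fun v m hm => ?_⟩
    obtain rfl : m = f' v := by simpa using hm
    exact hF v
  | comp g _ _ ihf ihg =>
    obtain ⟨Ff, hFf⟩ := ihf
    choose Fg hFg using ihg
    obtain ⟨G, hG⟩ := tupleMap ι hnno (fun i k => g i (List.Vector.ofFn k)) Fg
      (fun i k r hr => by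
        have h := hFg i (List.Vector.ofFn k) r hr
        rwa [vec_ofFn_get] at h)
    refine ⟨G ≫ Ff, fun v m hm => ?_⟩
    obtain ⟨w, hw, hm⟩ := Part.mem_bind_iff.1 hm
    have hall : ∀ i, w.get i ∈ g i (List.Vector.ofFn v.get) := by
      intro i
      rw [List.Vector.ofFn_get]
      exact mem_mOfFn _ w hw i
    rw [← Category.assoc, hG v.get w.get hall]
    exact hFf w m hm
  | @rfind n f pf ih =>
    obtain ⟨Ff, hFf⟩ := ih
    have hFf' : ∀ v : List.Vector ℕ (n + 1), Pt ι v.get ≫ Ff = num ι (f v) :=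
      fun v => hFf v (f v) (Part.mem_some_iff.2 rfl)
    obtain ⟨F, hF⟩ := rfind_rep ι hnno δl hδl hcoalg f Ff hFf'
    refine ⟨F, fun v m hm => ?_⟩
    have h1 : f (m ::ᵥ v) = 0 := by
      have := Nat.rfind_spec hm
      simp only [Part.mem_some_iff] at this
      exact of_decide_eq_true this.symm
    have h2 : ∀ j, j < m → f (j ::ᵥ v) ≠ 0 := by
      intro j hj
      have := Nat.rfind_min hm hj
      simp only [Part.mem_some_iff] at this
      intro hc
      rw [hc] at this
      simp at this
    exact hF v m h1 h2


end Main

end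
end PlotkinAux

/-- (After Plotkin) In a distributive monoidal category, if `ι : I ⨿ N ≅ N`,
`(N, inl ≫ ι, inr ≫ ι)` is a weak left natural numbers object, and `(N, ι⁻¹)` is a
weakly final natural numbers coalgebra, then every partial recursive function is
representable relative to `(N, inl ≫ ι, inr ≫ ι)`. -/
theorem plotkin_representable {C : Type u} [Category.{v} C] [MonoidalCategory C]
    [HasBinaryCoproducts C] [HasInitial C]
    -- the right distributors: inverses of the canonical maps
    (δr : ∀ A B X : C, ((A ⊗ X) ⨿ (B ⊗ X)) ≅ ((A ⨿ B) ⊗ X))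
    (hδr : ∀ A B X : C, (δr A B X).hom =
      coprod.desc ((coprod.inl : A ⟶ A ⨿ B) ⊗ₘ 𝟙 X) ((coprod.inr : B ⟶ A ⨿ B) ⊗ₘ 𝟙 X))
    -- the left distributors: inverses of the canonical maps
    (δl : ∀ X A B : C, ((X ⊗ A) ⨿ (X ⊗ B)) ≅ (X ⊗ (A ⨿ B)))
    (hδl : ∀ X A B : C, (δl X A B).hom =
      coprod.desc (𝟙 X ⊗ₘ (coprod.inl : A ⟶ A ⨿ B)) (𝟙 X ⊗ₘ (coprod.inr : B ⟶ A ⨿ B)))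
    -- the annihilators: the maps from the initial object are isomorphisms
    (hannr : ∀ A : C, IsIso (initial.to (A ⊗ ⊥_ C)))
    (hannl : ∀ A : C, IsIso (initial.to ((⊥_ C) ⊗ A)))
    -- the distinguished object and isomorphism
    {N : C} (ι : ((𝟙_ C) ⨿ N) ≅ N)
    -- `(N, inl ≫ ι, inr ≫ ι)` is a weak left natural numbers object
    (hnno : ∀ (A B : C) (b : B ⟶ A) (a : A ⟶ A), ∃ h : N ⊗ B ⟶ A,
      ((coprod.inl ≫ ι.hom) ⊗ₘ 𝟙 B) ≫ h = (λ_ B).hom ≫ b ∧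
      ((coprod.inr ≫ ι.hom) ⊗ₘ 𝟙 B) ≫ h = h ≫ a)
    -- `(N, ι⁻¹)` is a weakly final natural numbers coalgebra
    (hcoalg : ∀ (A : C) (β : A ⟶ (𝟙_ C) ⨿ A), ∃ h : A ⟶ N,
      β ≫ coprod.map (𝟙 (𝟙_ C)) h = h ≫ ι.inv) :
    ∀ (n : ℕ) (f : List.Vector ℕ n →. ℕ), Nat.Partrec' f →
      ∃ F : tpow C N n ⟶ N, ∀ (k : List.Vector ℕ n) (m : ℕ), m ∈ f k →
        (unitPow C n).hom ≫ numTensor (coprod.inl ≫ ι.hom) (coprod.inr ≫ ι.hom) k.get ≫ F =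
          numeral (coprod.inl ≫ ι.hom) (coprod.inr ≫ ι.hom) m := by
  intro n f pf
  obtain ⟨F, hF⟩ := PlotkinAux.part_rep ι hnno δl hδl hcoalg pf
  refine ⟨F, fun k m hm => ?_⟩
  have h := hF k m hm
  rw [← Category.assoc]
  exact h
end

section
/- Let (C, ⊗, I) be a monoidal category and let (N, z, s) be a weak left natural numbers object in C. Then every primitive recursive function is representable in C relative to (N, z, s): for every n and every primitive recursive function f : ℕⁿ → ℕ there exists a morphism F : N^{⊗n} ⟶ N such that for all k₁, …, kₙ ∈ ℕ, the composite of k₁̲ ⊗ ⋯ ⊗ kₙ̲ : I^{⊗n} ⟶ N^{⊗n} with F equals f(k₁, …, kₙ)̲ (modulo the canonical coherence isomorphism I ≅ I^{⊗n}). -/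
open CategoryTheory CategoryTheory.MonoidalCategory

universe v u

local infixr:70 " ⊗ " => MonoidalCategoryStruct.tensorHom

attribute [reducible] tpow

variable {C : Type u} [Category.{v} C] [MonoidalCategory C]

def pt {X Y : C} (u : 𝟙_ C ⟶ X) (v : 𝟙_ C ⟶ Y) : 𝟙_ C ⟶ X ⊗ Y :=
  (λ_ (𝟙_ C)).inv ≫ (u ⊗ v)

lemma pt_comp {X Y X' Y' : C} (u : 𝟙_ C ⟶ X) (v : 𝟙_ C ⟶ Y) (f : X ⟶ X') (g : Y ⟶ Y') :
    pt u v ≫ (f ⊗ g) = pt (u ≫ f) (v ≫ g) := by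
  simp [pt, MonoidalCategory.tensorHom_comp_tensorHom]

lemma pt_id_left {Y : C} (v : 𝟙_ C ⟶ Y) : pt (𝟙 (𝟙_ C)) v = v ≫ (λ_ Y).inv := by
  simp [pt, id_tensorHom]

lemma pt_id_right {X : C} (u : 𝟙_ C ⟶ X) : pt u (𝟙 (𝟙_ C)) = u ≫ (ρ_ X).inv := by
  simp [pt, tensorHom_id, ← unitors_equal]


lemma pt_assoc {X Y Z : C} (u : 𝟙_ C ⟶ X) (v : 𝟙_ C ⟶ Y) (w : 𝟙_ C ⟶ Z) :
    pt (pt u v) w ≫ (α_ X Y Z).hom = pt u (pt v w) := by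
  have hc : (λ_ (𝟙_ C)).inv ≫ ((λ_ (𝟙_ C)).inv ⊗ 𝟙 (𝟙_ C)) ≫ (α_ (𝟙_ C) (𝟙_ C) (𝟙_ C)).hom
      = (λ_ (𝟙_ C)).inv ≫ (𝟙 (𝟙_ C) ⊗ (λ_ (𝟙_ C)).inv) := by
    coherence
  calc pt (pt u v) w ≫ (α_ X Y Z).hom
      = (λ_ (𝟙_ C)).inv ≫ ((λ_ (𝟙_ C)).inv ⊗ 𝟙 (𝟙_ C)) ≫ ((u ⊗ v) ⊗ w) ≫ (α_ X Y Z).hom := by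
        simp only [pt, Category.assoc]
        rw [show ((λ_ (𝟙_ C)).inv ≫ (u ⊗ v)) ⊗ w
            = ((λ_ (𝟙_ C)).inv ⊗ 𝟙 (𝟙_ C)) ≫ ((u ⊗ v) ⊗ w) by
          rw [MonoidalCategory.tensorHom_comp_tensorHom]; simp]
        simp only [Category.assoc]
    _ = (λ_ (𝟙_ C)).inv ≫ ((λ_ (𝟙_ C)).inv ⊗ 𝟙 (𝟙_ C)) ≫ (α_ (𝟙_ C) (𝟙_ C) (𝟙_ C)).hom
          ≫ (u ⊗ (v ⊗ w)) := by
        rw [MonoidalCategory.associator_naturality]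
    _ = (λ_ (𝟙_ C)).inv ≫ (𝟙 (𝟙_ C) ⊗ (λ_ (𝟙_ C)).inv) ≫ (u ⊗ (v ⊗ w)) := by
        simp only [← Category.assoc] at hc ⊢
        rw [hc]
    _ = pt u (pt v w) := by
        simp only [pt]
        rw [show u ⊗ ((λ_ (𝟙_ C)).inv ≫ (v ⊗ w))
            = (𝟙 (𝟙_ C) ⊗ (λ_ (𝟙_ C)).inv) ≫ (u ⊗ (v ⊗ w)) by
          rw [MonoidalCategory.tensorHom_comp_tensorHom]; simp]

lemma pt_assoc_inv {X Y Z : C} (u : 𝟙_ C ⟶ X) (v : 𝟙_ C ⟶ Y) (w : 𝟙_ C ⟶ Z) :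
    pt u (pt v w) ≫ (α_ X Y Z).inv = pt (pt u v) w := by
  rw [← pt_assoc]; simp

def cpow {A : C} (a : A ⟶ A) : ℕ → (A ⟶ A)
  | 0 => 𝟙 A
  | m + 1 => cpow a m ≫ a

section
variable {N : C} (z : 𝟙_ C ⟶ N) (s : N ⟶ N)

lemma iter_lemma {A B : C} {b : B ⟶ A} {a : A ⟶ A} {h : N ⊗ B ⟶ A}
    (hz : (z ⊗ 𝟙 B) ≫ h = (λ_ B).hom ≫ b) (hs : (s ⊗ 𝟙 B) ≫ h = h ≫ a) (m : ℕ) :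
    (numeral z s m ⊗ 𝟙 B) ≫ h = (λ_ B).hom ≫ b ≫ cpow a m := by
  induction m with
  | zero => simpa [numeral, cpow] using hz
  | succ m ih =>
      have : (numeral z s (m+1) ⊗ 𝟙 B) = (numeral z s m ⊗ 𝟙 B) ≫ (s ⊗ 𝟙 B) := by
        rw [MonoidalCategory.tensorHom_comp_tensorHom]; simp [numeral]
      rw [this, Category.assoc, hs, ← Category.assoc, ih]
      simp [cpow]

lemma iter_pt {A B : C} {b : B ⟶ A} {a : A ⟶ A} {h : N ⊗ B ⟶ A}
    (hz : (z ⊗ 𝟙 B) ≫ h = (λ_ B).hom ≫ b) (hs : (s ⊗ 𝟙 B) ≫ h = h ≫ a)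
    (m : ℕ) (v : 𝟙_ C ⟶ B) :
    pt (numeral z s m) v ≫ h = v ≫ b ≫ cpow a m := by
  have h1 : pt (numeral z s m) v = v ≫ (λ_ B).inv ≫ (numeral z s m ⊗ 𝟙 B) := by
    have : pt (numeral z s m) v = pt (𝟙 _) v ≫ (numeral z s m ⊗ 𝟙 B) := by
      rw [pt_comp]; simp
    rw [this, pt_id_left]; simp
  rw [h1, Category.assoc, Category.assoc, iter_lemma z s hz hs]
  simp

variable (hnno : ∀ (A B : C) (b : B ⟶ A) (a : A ⟶ A), ∃ h : N ⊗ B ⟶ A,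
      (z ⊗ 𝟙 B) ≫ h = (λ_ B).hom ≫ b ∧ (s ⊗ 𝟙 B) ≫ h = h ≫ a)
include hnno

lemma exists_discard : ∃ e : N ⟶ 𝟙_ C, ∀ m, numeral z s m ≫ e = 𝟙 (𝟙_ C) := by
  obtain ⟨h, hz, hs⟩ := hnno (𝟙_ C) (𝟙_ C) (𝟙 _) (𝟙 _)
  refine ⟨(ρ_ N).inv ≫ h, fun m => ?_⟩
  have hp : cpow (𝟙 (𝟙_ C)) m = 𝟙 _ := by
    induction m with
    | zero => rfl
    | succ m ih => simp [cpow, ih]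
  rw [← Category.assoc, ← pt_id_right, iter_pt z s hz hs, hp]
  simp

lemma exists_dup : ∃ d : N ⟶ N ⊗ N,
    ∀ m, numeral z s m ≫ d = pt (numeral z s m) (numeral z s m) := by
  obtain ⟨h, hz, hs⟩ := hnno (N ⊗ N) (𝟙_ C) (pt z z) (s ⊗ s)
  refine ⟨(ρ_ N).inv ≫ h, fun m => ?_⟩
  have hp : pt z z ≫ cpow (s ⊗ s) m = pt (numeral z s m) (numeral z s m) := by
    induction m with
    | zero => simp [cpow, numeral]
    | succ m ih => rw [cpow, ← Category.assoc, ih, pt_comp]; rfl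
  rw [← Category.assoc, ← pt_id_right, iter_pt z s hz hs]
  simpa using hp

lemma exists_sw (X : C) : ∃ sw : N ⊗ X ⟶ X ⊗ N,
    ∀ (m : ℕ) (u : 𝟙_ C ⟶ X), pt (numeral z s m) u ≫ sw = pt u (numeral z s m) := by
  obtain ⟨h, hz, hs⟩ := hnno (X ⊗ N) X ((ρ_ X).inv ≫ (𝟙 X ⊗ z)) (𝟙 X ⊗ s)
  refine ⟨h, fun m u => ?_⟩
  rw [iter_pt z s hz hs]
  have : u ≫ ((ρ_ X).inv ≫ (𝟙 X ⊗ z)) = pt u z := by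
    rw [← Category.assoc, ← pt_id_right, pt_comp]; simp
  rw [← Category.assoc, this]
  induction m with
  | zero => simp [cpow, numeral]
  | succ m ih => rw [cpow, ← Category.assoc, ih, pt_comp]; simp [numeral]
end

section
variable {N : C} (z : 𝟙_ C ⟶ N) (s : N ⟶ N)

def nums {n : ℕ} (k : Fin n → ℕ) : 𝟙_ C ⟶ tpow C N n :=
  (unitPow C n).hom ≫ numTensor z s k

lemma nums_zero (k : Fin 0 → ℕ) : nums z s k = 𝟙 (𝟙_ C) := by
  simp [nums, unitPow, numTensor]

lemma nums_succ {n : ℕ} (k : Fin (n + 1) → ℕ) :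
    nums z s k = pt (nums z s (fun i => k i.castSucc)) (numeral z s (k (Fin.last n))) := by
  have : pt (nums z s (fun i => k i.castSucc)) (numeral z s (k (Fin.last n)))
      = pt ((unitPow C n).hom) (𝟙 _) ≫ (numTensor z s (fun i => k i.castSucc) ⊗ numeral z s (k (Fin.last n))) := by
    rw [pt_comp]; simp [nums]
  rw [this, pt_id_right]
  simp [nums, unitPow, numTensor, Iso.trans_hom, Iso.symm_hom, Category.assoc]
end

section
variable {N : C} (z : 𝟙_ C ⟶ N) (s : N ⟶ N)
variable (hnno : ∀ (A B : C) (b : B ⟶ A) (a : A ⟶ A), ∃ h : N ⊗ B ⟶ A,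
      (z ⊗ 𝟙 B) ≫ h = (λ_ B).hom ≫ b ∧ (s ⊗ 𝟙 B) ≫ h = h ≫ a)
include hnno

/-- Move a numeral from the left of a tensor power to the right, pointwise. -/
lemma exists_L (n : ℕ) : ∃ L : tpow C N n ⊗ N ⟶ N ⊗ tpow C N n,
    ∀ (k : Fin n → ℕ) (m : ℕ),
      pt (nums z s k) (numeral z s m) ≫ L = pt (numeral z s m) (nums z s k) := by
  obtain ⟨swN, hswN⟩ := exists_sw z s hnno N
  induction n with
  | zero =>
      refine ⟨(λ_ N).hom ≫ (ρ_ N).inv, fun k m => ?_⟩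
      rw [nums_zero, pt_id_left, pt_id_right]
      simp
  | succ n ih =>
      obtain ⟨L, hL⟩ := ih
      refine ⟨(α_ (tpow C N n) N N).hom ≫ (𝟙 _ ⊗ swN) ≫ (α_ _ _ _).inv
        ≫ (L ⊗ 𝟙 N) ≫ (α_ _ _ _).hom, fun k m => ?_⟩
      rw [nums_succ]
      set u := nums z s (fun i => k i.castSucc)
      set a := numeral z s (k (Fin.last n))
      set b := numeral z s m
      have h1 : pt (pt u a) b ≫ (α_ _ _ _).hom = pt u (pt a b) := pt_assoc _ _ _
      have h2 : pt u (pt a b) ≫ (𝟙 _ ⊗ swN) = pt u (pt b a) := by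
        rw [pt_comp, hswN]; simp; rfl
      have h3 : pt u (pt b a) ≫ (α_ _ _ _).inv = pt (pt u b) a := pt_assoc_inv _ _ _
      have h4 : pt (pt u b) a ≫ (L ⊗ 𝟙 N) = pt (pt b u) a := by
        rw [pt_comp, hL]; simp; rfl
      have h5 : pt (pt b u) a ≫ (α_ _ _ _).hom = pt b (pt u a) := pt_assoc _ _ _
      rw [← Category.assoc, h1, ← Category.assoc, h2, ← Category.assoc, h3,
        ← Category.assoc, h4, h5, ← nums_succ]
end

section
variable {N : C} (z : 𝟙_ C ⟶ N) (s : N ⟶ N)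

def rotIso (N : C) : ∀ n : ℕ, tpow C N (n + 1) ≅ N ⊗ tpow C N n
  | 0 => (λ_ N) ≪≫ (ρ_ N).symm
  | n + 1 => (whiskerRightIso (rotIso N n) N) ≪≫ α_ N (tpow C N n) N

lemma rot_hom : ∀ (n : ℕ) (k : Fin (n + 1) → ℕ),
    nums z s k ≫ (rotIso N n).hom = pt (numeral z s (k 0)) (nums z s (k ∘ Fin.succ)) := by
  intro n
  induction n with
  | zero =>
      intro k
      rw [nums_succ, nums_zero, pt_id_left, nums_zero, pt_id_right]
      simp [rotIso]
  | succ n ih =>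
      intro k
      rw [nums_succ]
      have hw : (rotIso N (n+1)).hom
          = ((rotIso N n).hom ⊗ 𝟙 N) ≫ (α_ N (tpow C N n) N).hom := by
        simp [rotIso, tensorHom_id]
      rw [hw, ← Category.assoc, pt_comp, Category.comp_id, ih, pt_assoc]
      have e1 : k (Fin.castSucc 0) = k 0 := by simp
      have e2 : ((fun (i : Fin (n+1)) => k i.castSucc) ∘ Fin.succ)
          = fun (i : Fin n) => (k ∘ Fin.succ) i.castSucc := by
        funext i
        simp [Function.comp]
      have e3 : k (Fin.last (n+1)) = (k ∘ Fin.succ) (Fin.last n) := by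
        simp [Function.comp, Fin.succ_last]
      rw [e1, e2, e3, ← nums_succ]

lemma rot_inv (n : ℕ) (m : ℕ) (k : Fin n → ℕ) :
    pt (numeral z s m) (nums z s k) ≫ (rotIso N n).inv = nums z s (Fin.cons m k) := by
  have h := rot_hom z s n (Fin.cons m k)
  rw [show (Fin.cons m k : Fin (n+1) → ℕ) 0 = m by simp,
    show (Fin.cons m k : Fin (n+1) → ℕ) ∘ Fin.succ = k by funext i; simp] at h
  rw [← h]; simp
end

section
variable {N : C} (z : 𝟙_ C ⟶ N) (s : N ⟶ N)
variable (hnno : ∀ (A B : C) (b : B ⟶ A) (a : A ⟶ A), ∃ h : N ⊗ B ⟶ A,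
      (z ⊗ 𝟙 B) ≫ h = (λ_ B).hom ≫ b ∧ (s ⊗ 𝟙 B) ≫ h = h ≫ a)
include hnno

lemma exists_E (n : ℕ) : ∃ E : tpow C N n ⟶ 𝟙_ C,
    ∀ k : Fin n → ℕ, nums z s k ≫ E = 𝟙 (𝟙_ C) := by
  obtain ⟨e, he⟩ := exists_discard z s hnno
  induction n with
  | zero => exact ⟨𝟙 _, fun k => by rw [nums_zero]; simp⟩
  | succ n ih =>
      obtain ⟨E, hE⟩ := ih
      refine ⟨(E ⊗ e) ≫ (λ_ (𝟙_ C)).hom, fun k => ?_⟩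
      rw [nums_succ, ← Category.assoc, pt_comp, hE, he, pt_id_left]
      simp

lemma exists_Dup (n : ℕ) : ∃ D : tpow C N n ⟶ tpow C N n ⊗ tpow C N n,
    ∀ k : Fin n → ℕ, nums z s k ≫ D = pt (nums z s k) (nums z s k) := by
  obtain ⟨d, hd⟩ := exists_dup z s hnno
  induction n with
  | zero =>
      refine ⟨(λ_ (𝟙_ C)).inv, fun k => ?_⟩
      rw [nums_zero, pt_id_left]
  | succ n ih =>
      obtain ⟨D, hD⟩ := ih
      obtain ⟨L, hL⟩ := exists_L z s hnno (n + 1)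
      refine ⟨(D ⊗ d) ≫ (α_ _ _ _).hom ≫ (𝟙 _ ⊗ (α_ _ _ _).inv)
        ≫ (𝟙 _ ⊗ L) ≫ (α_ _ _ _).inv, fun k => ?_⟩
      rw [nums_succ]
      set u := nums z s (fun i => k i.castSucc) with hu
      set m := numeral z s (k (Fin.last n)) with hm
      have h0 : pt u m ≫ (D ⊗ d) = pt (pt u u) (pt m m) := by
        rw [pt_comp, hD, hd]
      have h1 : pt (pt u u) (pt m m) ≫ (α_ _ _ _).hom = pt u (pt u (pt m m)) :=
        pt_assoc _ _ _
      have h2 : pt u (pt u (pt m m)) ≫ (𝟙 _ ⊗ (α_ _ _ _).inv)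
          = pt u (pt (pt u m) m) := by
        rw [pt_comp, pt_assoc_inv]; simp
      have h3 : pt u (pt (pt u m) m) ≫ (𝟙 _ ⊗ L) = pt u (pt m (pt u m)) := by
        have : pt (pt u m) m ≫ L = pt m (pt u m) := by
          have := hL k (k (Fin.last n))
          rwa [nums_succ z s k, ← hu, ← hm] at this
        rw [pt_comp, this]; simp
      have h4 : pt u (pt m (pt u m)) ≫ (α_ (tpow C N n) N (tpow C N (n+1))).inv
          = pt (pt u m) (pt u m) := pt_assoc_inv _ _ _
      rw [← Category.assoc, ← Category.assoc, ← Category.assoc, ← Category.assoc,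
        h0, Category.assoc, Category.assoc, Category.assoc,
        ← Category.assoc, h1, ← Category.assoc, h2, ← Category.assoc, h3, h4]

lemma exists_proj (n : ℕ) (i : Fin n) : ∃ P : tpow C N n ⟶ N,
    ∀ k : Fin n → ℕ, nums z s k ≫ P = numeral z s (k i) := by
  obtain ⟨e, he⟩ := exists_discard z s hnno
  induction n with
  | zero => exact absurd i.2 (by simp)
  | succ n ih =>
      refine Fin.lastCases ?_ ?_ i
      · obtain ⟨E, hE⟩ := exists_E z s hnno n
        refine ⟨(E ⊗ 𝟙 N) ≫ (λ_ N).hom, fun k => ?_⟩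
        rw [nums_succ, ← Category.assoc, pt_comp, hE, pt_id_left]
        simp
      · intro j
        obtain ⟨P, hP⟩ := ih j
        refine ⟨(𝟙 _ ⊗ e) ≫ (ρ_ _).hom ≫ P, fun k => ?_⟩
        rw [nums_succ, ← Category.assoc, pt_comp, he, pt_id_right]
        simp [hP]
end

section
variable {N : C} (z : 𝟙_ C ⟶ N) (s : N ⟶ N)
variable (hnno : ∀ (A B : C) (b : B ⟶ A) (a : A ⟶ A), ∃ h : N ⊗ B ⟶ A,
      (z ⊗ 𝟙 B) ≫ h = (λ_ B).hom ≫ b ∧ (s ⊗ 𝟙 B) ≫ h = h ≫ a)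
include hnno

lemma exists_tuple (m : ℕ) : ∀ (n : ℕ) (gv : Fin n → (Fin m → ℕ) → ℕ)
    (G : Fin n → (tpow C N m ⟶ N)),
    (∀ i k, nums z s k ≫ G i = numeral z s (gv i k)) →
    ∃ T : tpow C N m ⟶ tpow C N n,
      ∀ k : Fin m → ℕ, nums z s k ≫ T = nums z s (fun i => gv i k) := by
  intro n
  induction n with
  | zero =>
      intro gv G hG
      obtain ⟨E, hE⟩ := exists_E z s hnno m
      exact ⟨E, fun k => by rw [hE, nums_zero]⟩
  | succ n ih =>
      intro gv G hG
      obtain ⟨T, hT⟩ := ih (fun i => gv i.castSucc) (fun i => G i.castSucc)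
        (fun i k => hG i.castSucc k)
      obtain ⟨D, hD⟩ := exists_Dup z s hnno m
      refine ⟨D ≫ (T ⊗ G (Fin.last n)), fun k => ?_⟩
      rw [← Category.assoc, hD, pt_comp, hT, hG, nums_succ z s (fun i => gv i k)]
end

section
variable {N : C}

def precPsi (N : C) (n : ℕ) :
    N ⊗ (N ⊗ (tpow C N n ⊗ tpow C N n)) ⟶ tpow C N (n+2) ⊗ tpow C N n :=
  (𝟙 N ⊗ (α_ N (tpow C N n) (tpow C N n)).inv)
    ≫ (𝟙 N ⊗ ((rotIso N n).inv ⊗ 𝟙 (tpow C N n)))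
    ≫ (α_ N (tpow C N (n+1)) (tpow C N n)).inv
    ≫ ((rotIso N (n+1)).inv ⊗ 𝟙 (tpow C N n))

def precB (z : 𝟙_ C ⟶ N) (n : ℕ) (Ff : tpow C N n ⟶ N)
    (D : tpow C N n ⟶ tpow C N n ⊗ tpow C N n) :
    tpow C N n ⟶ N ⊗ (N ⊗ tpow C N n) :=
  D ≫ (Ff ⊗ 𝟙 (tpow C N n)) ≫ (λ_ (N ⊗ tpow C N n)).inv ≫ (z ⊗ 𝟙 (N ⊗ tpow C N n))

def precA (s : N ⟶ N) (n : ℕ) (d : N ⟶ N ⊗ N)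
    (D : tpow C N n ⟶ tpow C N n ⊗ tpow C N n) (Fg : tpow C N (n+2) ⟶ N) :
    N ⊗ (N ⊗ tpow C N n) ⟶ N ⊗ (N ⊗ tpow C N n) :=
  (d ⊗ 𝟙 (N ⊗ tpow C N n)) ≫ (𝟙 (N ⊗ N) ⊗ (𝟙 N ⊗ D))
    ≫ (α_ N N (N ⊗ (tpow C N n ⊗ tpow C N n))).hom
    ≫ (𝟙 N ⊗ precPsi N n) ≫ (s ⊗ (Fg ⊗ 𝟙 (tpow C N n)))

def precOut (n : ℕ) (e : N ⟶ 𝟙_ C) (E : tpow C N n ⟶ 𝟙_ C) :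
    N ⊗ (N ⊗ tpow C N n) ⟶ N :=
  (e ⊗ 𝟙 (N ⊗ tpow C N n)) ≫ (λ_ (N ⊗ tpow C N n)).hom ≫ (𝟙 N ⊗ E) ≫ (ρ_ N).hom

variable (z : 𝟙_ C ⟶ N) (s : N ⟶ N)

lemma precB_pt (n : ℕ) (Ff : tpow C N n ⟶ N)
    (D : tpow C N n ⟶ tpow C N n ⊗ tpow C N n)
    (fv : (Fin n → ℕ) → ℕ)
    (hFf : ∀ t, nums z s t ≫ Ff = numeral z s (fv t))
    (hD : ∀ t, nums z s t ≫ D = pt (nums z s t) (nums z s t)) (t : Fin n → ℕ) :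
    nums z s t ≫ precB z n Ff D
      = pt (numeral z s 0) (pt (numeral z s (fv t)) (nums z s t)) := by
  rw [precB, ← Category.assoc, hD, ← Category.assoc, pt_comp, hFf, Category.comp_id,
    ← Category.assoc, ← pt_id_left, pt_comp, Category.comp_id]
  simp [numeral]

lemma precPsi_pt (n : ℕ) (y c : ℕ) (t : Fin n → ℕ) :
    pt (numeral z s y) (pt (numeral z s c) (pt (nums z s t) (nums z s t)))
      ≫ precPsi N n
    = pt (nums z s (Fin.cons y (Fin.cons c t))) (nums z s t) := by
  set uy := numeral z s y
  set uc := numeral z s c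
  set vt := nums z s t
  have q1 : pt uy (pt uc (pt vt vt)) ≫ (𝟙 N ⊗ (α_ N (tpow C N n) (tpow C N n)).inv)
      = pt uy (pt (pt uc vt) vt) := by
    rw [pt_comp, Category.comp_id, pt_assoc_inv]
  have q2 : pt uy (pt (pt uc vt) vt) ≫ (𝟙 N ⊗ ((rotIso N n).inv ⊗ 𝟙 (tpow C N n)))
      = pt uy (pt (nums z s (Fin.cons c t)) vt) := by
    rw [pt_comp, Category.comp_id, pt_comp, Category.comp_id, rot_inv]
  have q3 : pt uy (pt (nums z s (Fin.cons c t)) vt)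
      ≫ (α_ N (tpow C N (n+1)) (tpow C N n)).inv
      = pt (pt uy (nums z s (Fin.cons c t))) vt := pt_assoc_inv _ _ _
  have q4 : pt (pt uy (nums z s (Fin.cons c t))) vt
      ≫ ((rotIso N (n+1)).inv ⊗ 𝟙 (tpow C N n))
      = pt (nums z s (Fin.cons y (Fin.cons c t))) vt := by
    rw [pt_comp, Category.comp_id, rot_inv]
  rw [precPsi, ← Category.assoc, q1, ← Category.assoc, q2, ← Category.assoc, q3, q4]

lemma precA_pt (n : ℕ) (d : N ⟶ N ⊗ N)
    (D : tpow C N n ⟶ tpow C N n ⊗ tpow C N n) (Fg : tpow C N (n+2) ⟶ N)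
    (gv : (Fin (n+2) → ℕ) → ℕ)
    (hd : ∀ m, numeral z s m ≫ d = pt (numeral z s m) (numeral z s m))
    (hD : ∀ t, nums z s t ≫ D = pt (nums z s t) (nums z s t))
    (hFg : ∀ j, nums z s j ≫ Fg = numeral z s (gv j))
    (y c : ℕ) (t : Fin n → ℕ) :
    pt (numeral z s y) (pt (numeral z s c) (nums z s t)) ≫ precA s n d D Fg
    = pt (numeral z s (y+1))
        (pt (numeral z s (gv (Fin.cons y (Fin.cons c t)))) (nums z s t)) := by
  set uy := numeral z s y with huy
  set uc := numeral z s c with huc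
  set vt := nums z s t with hvt
  have s1 : pt uy (pt uc vt) ≫ (d ⊗ 𝟙 (N ⊗ tpow C N n))
      = pt (pt uy uy) (pt uc vt) := by
    rw [pt_comp, huy, hd, Category.comp_id]
  have s2 : pt (pt uy uy) (pt uc vt) ≫ (𝟙 (N ⊗ N) ⊗ (𝟙 N ⊗ D))
      = pt (pt uy uy) (pt uc (pt vt vt)) := by
    rw [pt_comp, Category.comp_id, pt_comp, Category.comp_id, hvt, hD]
  have s3 : pt (pt uy uy) (pt uc (pt vt vt))
      ≫ (α_ N N (N ⊗ (tpow C N n ⊗ tpow C N n))).hom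
      = pt uy (pt uy (pt uc (pt vt vt))) := pt_assoc _ _ _
  have s4 : pt uy (pt uy (pt uc (pt vt vt))) ≫ (𝟙 N ⊗ precPsi N n)
      = pt uy (pt (nums z s (Fin.cons y (Fin.cons c t))) vt) := by
    rw [pt_comp, Category.comp_id, huy, huc, hvt, precPsi_pt]
  have s5 : pt uy (pt (nums z s (Fin.cons y (Fin.cons c t))) vt)
      ≫ (s ⊗ (Fg ⊗ 𝟙 (tpow C N n)))
      = pt (numeral z s (y+1))
          (pt (numeral z s (gv (Fin.cons y (Fin.cons c t)))) vt) := by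
    rw [pt_comp, pt_comp, Category.comp_id, hFg]
    rfl

  rw [precA, ← Category.assoc, s1, ← Category.assoc, s2, ← Category.assoc, s3,
    ← Category.assoc, s4, s5]

end

section
variable {N : C} (z : 𝟙_ C ⟶ N) (s : N ⟶ N)
variable (hnno : ∀ (A B : C) (b : B ⟶ A) (a : A ⟶ A), ∃ h : N ⊗ B ⟶ A,
      (z ⊗ 𝟙 B) ≫ h = (λ_ B).hom ≫ b ∧ (s ⊗ 𝟙 B) ≫ h = h ≫ a)
include hnno

lemma exists_prec (n : ℕ) (fv : (Fin n → ℕ) → ℕ) (gv : (Fin (n+2) → ℕ) → ℕ)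
    (Ff : tpow C N n ⟶ N) (Fg : tpow C N (n+2) ⟶ N)
    (hFf : ∀ t, nums z s t ≫ Ff = numeral z s (fv t))
    (hFg : ∀ j, nums z s j ≫ Fg = numeral z s (gv j)) :
    ∃ F : tpow C N (n+1) ⟶ N, ∀ k : Fin (n+1) → ℕ,
      nums z s k ≫ F = numeral z s
        (Nat.rec (fv (k ∘ Fin.succ))
          (fun y IH => gv (Fin.cons y (Fin.cons IH (k ∘ Fin.succ)))) (k 0)) := by
  obtain ⟨e, he⟩ := exists_discard z s hnno
  obtain ⟨d, hd⟩ := exists_dup z s hnno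
  obtain ⟨D, hD⟩ := exists_Dup z s hnno n
  obtain ⟨E, hE⟩ := exists_E z s hnno n
  obtain ⟨h, hhz, hhs⟩ := hnno (N ⊗ (N ⊗ tpow C N n)) (tpow C N n)
    (precB z n Ff D) (precA s n d D Fg)
  refine ⟨(rotIso N n).hom ≫ h ≫ precOut n e E, fun k => ?_⟩
  have hout : ∀ (y c : ℕ) (t : Fin n → ℕ),
      pt (numeral z s y) (pt (numeral z s c) (nums z s t)) ≫ precOut n e E
      = numeral z s c := by
    intro y c t
    rw [precOut, ← Category.assoc, pt_comp, he, Category.comp_id, pt_id_left]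
    simp only [Category.assoc, Iso.inv_hom_id_assoc]
    rw [← Category.assoc, pt_comp, Category.comp_id, hE, pt_id_right]
    simp
  have hinv : ∀ (m : ℕ) (t : Fin n → ℕ),
      nums z s t ≫ precB z n Ff D ≫ cpow (precA s n d D Fg) m
      = pt (numeral z s m)
          (pt (numeral z s
            (Nat.rec (fv t) (fun y IH => gv (Fin.cons y (Fin.cons IH t))) m))
            (nums z s t)) := by
    intro m t
    induction m with
    | zero =>
        rw [cpow, Category.comp_id]
        exact precB_pt z s n Ff D fv hFf hD t
    | succ m ih =>
        rw [cpow]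
        have hassoc : nums z s t ≫ precB z n Ff D
            ≫ (cpow (precA s n d D Fg) m ≫ precA s n d D Fg)
            = (nums z s t ≫ precB z n Ff D ≫ cpow (precA s n d D Fg) m)
              ≫ precA s n d D Fg := by
          simp only [Category.assoc]
        rw [hassoc, ih, precA_pt z s n d D Fg gv hd hD hFg]
  rw [← Category.assoc, rot_hom, ← Category.assoc,
    iter_pt z s hhz hhs (k 0) (nums z s (k ∘ Fin.succ)), hinv (k 0) (k ∘ Fin.succ),
    hout]
end

section
variable {N : C} (z : 𝟙_ C ⟶ N) (s : N ⟶ N)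
variable (hnno : ∀ (A B : C) (b : B ⟶ A) (a : A ⟶ A), ∃ h : N ⊗ B ⟶ A,
      (z ⊗ 𝟙 B) ≫ h = (λ_ B).hom ≫ b ∧ (s ⊗ 𝟙 B) ≫ h = h ≫ a)
include hnno

omit hnno in
lemma vec_cons_ofFn {n : ℕ} (y IH : ℕ) (t : Fin n → ℕ) :
    (y ::ᵥ IH ::ᵥ List.Vector.ofFn t) = List.Vector.ofFn (Fin.cons y (Fin.cons IH t)) := by
  apply List.Vector.ext
  intro i
  refine Fin.cases ?_ (fun j => ?_) i
  · simp [List.Vector.get_ofFn]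
  · refine Fin.cases ?_ (fun j2 => ?_) j
    · rw [List.Vector.get_cons_succ, List.Vector.get_cons_zero,
        List.Vector.get_ofFn, Fin.cons_succ, Fin.cons_zero]
    · simp [List.Vector.get_ofFn]

lemma rep_main : ∀ {n : ℕ} {f : List.Vector ℕ n → ℕ}, Nat.Primrec' f →
    ∃ F : tpow C N n ⟶ N, ∀ k : Fin n → ℕ,
      nums z s k ≫ F = numeral z s (f (List.Vector.ofFn k)) := by
  intro n f hf
  induction hf with
  | zero =>
      obtain ⟨E, hE⟩ := exists_E z s hnno _
      exact ⟨E ≫ z, fun k => by rw [← Category.assoc, hE]; simp [numeral]⟩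
  | succ =>
      refine ⟨(λ_ N).hom ≫ s, fun k => ?_⟩
      rw [nums_succ, nums_zero, pt_id_left]
      have : k (Fin.last 0) = k 0 := rfl
      simp only [Category.assoc, Iso.inv_hom_id_assoc, this]
      simp [List.Vector.head_ofFn, numeral]
  | get i =>
      obtain ⟨P, hP⟩ := exists_proj z s hnno _ i
      exact ⟨P, fun k => by rw [hP]; congr 1; simp [List.Vector.get_ofFn]⟩
  | @comp m nn f g hf hg ihf ihg =>
      obtain ⟨F, hF⟩ := ihf
      choose G hG using ihg
      obtain ⟨T, hT⟩ := exists_tuple z s hnno m nn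
        (fun i k => g i (List.Vector.ofFn k)) G hG
      refine ⟨T ≫ F, fun k => ?_⟩
      rw [← Category.assoc, hT, hF]
  | @prec nn f g hf hg ihf ihg =>
      obtain ⟨Ff, hFf⟩ := ihf
      obtain ⟨Fg, hFg⟩ := ihg
      obtain ⟨F, hF⟩ := exists_prec z s hnno nn
        (fun t => f (List.Vector.ofFn t)) (fun j => g (List.Vector.ofFn j))
        Ff Fg hFf hFg
      refine ⟨F, fun k => ?_⟩
      rw [hF]
      have h1 : (List.Vector.ofFn k).head = k 0 := List.Vector.head_ofFn k
      have h2 : (List.Vector.ofFn k).tail = List.Vector.ofFn (k ∘ Fin.succ) := by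
        rw [List.Vector.tail_ofFn]
        rfl
      have hstep : (fun (y IH : ℕ) => g (y ::ᵥ IH ::ᵥ List.Vector.ofFn (k ∘ Fin.succ)))
          = fun (y IH : ℕ) => g (List.Vector.ofFn (Fin.cons y (Fin.cons IH (k ∘ Fin.succ)))) := by
        funext y IH
        rw [vec_cons_ofFn]
      congr 1
end

/-- (Plotkin) If `(N, z, s)` is a weak left natural numbers object in a monoidal
category, then every primitive recursive function is representable relative to
`(N, z, s)`. -/
theorem primrec_representable {C : Type u} [Category.{v} C] [MonoidalCategory C]
    {N : C} (z : 𝟙_ C ⟶ N) (s : N ⟶ N)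
    -- `(N, z, s)` is a weak left natural numbers object
    (hnno : ∀ (A B : C) (b : B ⟶ A) (a : A ⟶ A), ∃ h : N ⊗ B ⟶ A,
      (z ⊗ₘ 𝟙 B) ≫ h = (λ_ B).hom ≫ b ∧ (s ⊗ₘ 𝟙 B) ≫ h = h ≫ a) :
    ∀ (n : ℕ) (f : List.Vector ℕ n → ℕ), Nat.Primrec' f →
      ∃ F : tpow C N n ⟶ N, ∀ k : List.Vector ℕ n,
        (unitPow C n).hom ≫ numTensor z s k.get ≫ F = numeral z s (f k) := by
  intro n f hf
  obtain ⟨F, hF⟩ := rep_main z s hnno hf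
  refine ⟨F, fun k => ?_⟩
  have hk := hF k.get
  rw [List.Vector.ofFn_get] at hk
  simpa [nums, Category.assoc] using hk
end

section
/- Let C be a category with binary coproducts and an initial object, equipped with a trace Tr on its coproduct structure. For f : A ⟶ X ⨿ A define f† : A ⟶ X by f† = Tr^A_{A,X}([1_A, 1_A] ≫ f), where [1_A, 1_A] : A ⨿ A ⟶ A is the codiagonal. Then f† satisfies the fixed point property f† = f ≫ [1_X, f†]. -/
open CategoryTheory CategoryTheory.Limits

universe v u

set_option maxHeartbeats 1000000 in
/-- In a category with binary coproducts and an initial object equipped with a trace on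
the coproduct structure, the iteration operator `f† = Tr^A([1_A, 1_A] ≫ f)` satisfies the
fixed point property `f† = f ≫ [1_X, f†]`. -/
theorem trace_dagger_fixedPoint {C : Type u} [Category.{v} C]
    [HasBinaryCoproducts C] [HasInitial C]
    -- a trace on the coproduct structure
    (Tr : ∀ (A B X : C), (A ⨿ X ⟶ B ⨿ X) → (A ⟶ B))
    (tr1 : ∀ (A B : C) (f : A ⨿ ⊥_ C ⟶ B ⨿ ⊥_ C),
      Tr A B (⊥_ C) f = (coprod.rightUnitor A).inv ≫ f ≫ (coprod.rightUnitor B).hom)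
    (tr2 : ∀ (A B X Y : C) (f : A ⨿ (X ⨿ Y) ⟶ B ⨿ (X ⨿ Y)),
      Tr A B (X ⨿ Y) f = Tr A B X (Tr (A ⨿ X) (B ⨿ X) Y
        ((coprod.associator A X Y).hom ≫ f ≫ (coprod.associator B X Y).inv)))
    (tr3 : ∀ (A A' B B' X : C) (g : A' ⟶ A) (f : A ⨿ X ⟶ B ⨿ X) (h : B ⟶ B'),
      g ≫ Tr A B X f ≫ h = Tr A' B' X (coprod.map g (𝟙 X) ≫ f ≫ coprod.map h (𝟙 X)))
    (tr4 : ∀ (A B D X : C) (f : A ⨿ X ⟶ B ⨿ X),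
      coprod.map (𝟙 D) (Tr A B X f) = Tr (D ⨿ A) (D ⨿ B) X
        ((coprod.associator D A X).hom ≫ coprod.map (𝟙 D) f ≫ (coprod.associator D B X).inv))
    (tr5 : ∀ (A B X Y : C) (h : X ⟶ Y) (f : A ⨿ Y ⟶ B ⨿ X),
      Tr A B X (coprod.map (𝟙 A) h ≫ f) = Tr A B Y (f ≫ coprod.map (𝟙 B) h))
    (tr6 : ∀ A : C, Tr A A A (coprod.braiding A A).hom = 𝟙 A)
    {A X : C} (f : A ⟶ X ⨿ A) :
    Tr A X A (coprod.desc (𝟙 A) (𝟙 A) ≫ f) =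
      f ≫ coprod.desc (𝟙 X) (Tr A X A (coprod.desc (𝟙 A) (𝟙 A) ≫ f)) := by
  have h0 : coprod.desc (𝟙 A) (𝟙 A) ≫ f = coprod.desc f f := by ext <;> simp
  rw [h0]
  -- Lemma V : a loop whose body exits immediately evaluates by a single composition
  have hV : ∀ (A' B X' : C) (p : A' ⟶ B ⨿ X') (s : X' ⟶ B),
      Tr A' B X' (coprod.desc p (s ≫ coprod.inl)) = p ≫ coprod.desc (𝟙 B) s := by
    intro A' B X' p s
    have hv : Tr (B ⨿ B) B B (coprod.desc (𝟙 (B ⨿ B)) coprod.inl)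
        = coprod.desc (𝟙 B) (𝟙 B) := by
      have hc : Tr (B ⨿ B) (B ⨿ B) B
          ((coprod.associator B B B).hom ≫ coprod.map (𝟙 B) (coprod.braiding B B).hom ≫
            (coprod.associator B B B).inv) = 𝟙 (B ⨿ B) := by
        rw [← tr4, tr6]; simp
      have h3 := tr3 (B ⨿ B) (B ⨿ B) (B ⨿ B) B B (𝟙 (B ⨿ B))
        ((coprod.associator B B B).hom ≫ coprod.map (𝟙 B) (coprod.braiding B B).hom ≫
          (coprod.associator B B B).inv) (coprod.desc (𝟙 B) (𝟙 B))
      rw [hc] at h3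
      simp only [Category.id_comp] at h3
      have heq : coprod.map (𝟙 (B ⨿ B)) (𝟙 B) ≫
          ((coprod.associator B B B).hom ≫ coprod.map (𝟙 B) (coprod.braiding B B).hom ≫
            (coprod.associator B B B).inv) ≫ coprod.map (coprod.desc (𝟙 B) (𝟙 B)) (𝟙 B)
          = coprod.desc (𝟙 (B ⨿ B)) coprod.inl := by
        ext <;> simp [coprod.associator, coprod.inl_desc, coprod.inr_desc, coprod.inl_desc_assoc, coprod.inr_desc_assoc]
      rw [heq] at h3
      exact h3.symm
    have ha : coprod.desc p (s ≫ coprod.inl)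
        = coprod.map (𝟙 A') s ≫ coprod.desc p coprod.inl := by ext <;> simp
    have hb : coprod.desc p coprod.inl ≫ coprod.map (𝟙 B) s
        = coprod.map (p ≫ coprod.map (𝟙 B) s) (𝟙 B) ≫ coprod.desc (𝟙 (B ⨿ B)) coprod.inl ≫
            coprod.map (𝟙 B) (𝟙 B) := by ext <;> simp
    rw [ha, tr5, hb, ← tr3, hv]
    simp
  -- E1 : the right hand side as a single trace
  have e1 : Tr A X A (coprod.desc (f ≫ coprod.desc coprod.inl f) f)
      = f ≫ coprod.desc (𝟙 X) (Tr A X A (coprod.desc f f)) := by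
    have e1a := tr4 A X X A (coprod.desc f f)
    have e1b := tr3 (X ⨿ A) A (X ⨿ X) X A f
      ((coprod.associator X A A).hom ≫ coprod.map (𝟙 X) (coprod.desc f f) ≫
        (coprod.associator X X A).inv) (coprod.desc (𝟙 X) (𝟙 X))
    have heq : coprod.map f (𝟙 A) ≫
        ((coprod.associator X A A).hom ≫ coprod.map (𝟙 X) (coprod.desc f f) ≫
          (coprod.associator X X A).inv) ≫ coprod.map (coprod.desc (𝟙 X) (𝟙 X)) (𝟙 A)
        = coprod.desc (f ≫ coprod.desc coprod.inl f) f := by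
      ext <;> simp [coprod.associator, coprod.inl_desc, coprod.inr_desc, coprod.inl_desc_assoc, coprod.inr_desc_assoc]
    rw [heq] at e1b
    rw [← e1b, ← e1a]
    simp
  -- E2 : create the big loop X ⨿ A by sliding f
  have e2 : Tr A X A (coprod.desc f f)
      = Tr A X (X ⨿ A) (coprod.desc f (𝟙 (X ⨿ A)) ≫ coprod.map (𝟙 X) f) := by
    have h := tr5 A X A (X ⨿ A) f (coprod.desc f (𝟙 (X ⨿ A)))
    rw [show coprod.map (𝟙 A) f ≫ coprod.desc f (𝟙 (X ⨿ A)) = coprod.desc f f by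
      ext <;> simp] at h
    exact h
  -- E3 : reorder the loop to A ⨿ X by sliding the braiding
  have e3 : Tr A X (X ⨿ A) (coprod.desc f (𝟙 (X ⨿ A)) ≫ coprod.map (𝟙 X) f)
      = Tr A X (A ⨿ X) ((coprod.map (𝟙 A) (coprod.braiding X A).inv ≫
          (coprod.desc f (𝟙 (X ⨿ A)) ≫ coprod.map (𝟙 X) f)) ≫
          coprod.map (𝟙 X) (coprod.braiding X A).hom) := by
    have h := tr5 A X (X ⨿ A) (A ⨿ X) (coprod.braiding X A).hom
      (coprod.map (𝟙 A) (coprod.braiding X A).inv ≫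
        (coprod.desc f (𝟙 (X ⨿ A)) ≫ coprod.map (𝟙 X) f))
    rw [show coprod.map (𝟙 A) (coprod.braiding X A).hom ≫
        (coprod.map (𝟙 A) (coprod.braiding X A).inv ≫
          (coprod.desc f (𝟙 (X ⨿ A)) ≫ coprod.map (𝟙 X) f))
        = coprod.desc f (𝟙 (X ⨿ A)) ≫ coprod.map (𝟙 X) f by ext <;> simp [Category.id_comp, coprod.inl_desc, coprod.inr_desc, coprod.inl_desc_assoc, coprod.inr_desc_assoc]] at h
    exact h
  -- E4 : split the double loop, inner loop over X
  have e4 := tr2 A X A X ((coprod.map (𝟙 A) (coprod.braiding X A).inv ≫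
      (coprod.desc f (𝟙 (X ⨿ A)) ≫ coprod.map (𝟙 X) f)) ≫
      coprod.map (𝟙 X) (coprod.braiding X A).hom)
  -- E5 : compute the inner integrand
  have e5 : (coprod.associator A A X).hom ≫
      ((coprod.map (𝟙 A) (coprod.braiding X A).inv ≫
        (coprod.desc f (𝟙 (X ⨿ A)) ≫ coprod.map (𝟙 X) f)) ≫
        coprod.map (𝟙 X) (coprod.braiding X A).hom) ≫ (coprod.associator X A X).inv
      = coprod.desc (coprod.desc
          (f ≫ coprod.desc (coprod.inl ≫ coprod.inl)
            (f ≫ coprod.desc coprod.inr (coprod.inr ≫ coprod.inl)))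
          (f ≫ coprod.desc coprod.inr (coprod.inr ≫ coprod.inl)))
          (coprod.inl ≫ coprod.inl) := by
    ext <;> simp [coprod.associator, coprod.inl_desc, coprod.inr_desc, coprod.inl_desc_assoc, coprod.inr_desc_assoc]
  rw [e5] at e4
  rw [hV (A ⨿ A) (X ⨿ A) X
      (coprod.desc
        (f ≫ coprod.desc (coprod.inl ≫ coprod.inl)
          (f ≫ coprod.desc coprod.inr (coprod.inr ≫ coprod.inl)))
        (f ≫ coprod.desc coprod.inr (coprod.inr ≫ coprod.inl))) coprod.inl] at e4
  have e7 : coprod.desc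
        (f ≫ coprod.desc (coprod.inl ≫ coprod.inl)
          (f ≫ coprod.desc coprod.inr (coprod.inr ≫ coprod.inl)))
        (f ≫ coprod.desc coprod.inr (coprod.inr ≫ coprod.inl))
      ≫ coprod.desc (𝟙 (X ⨿ A)) coprod.inl
      = coprod.desc (f ≫ coprod.desc coprod.inl f) f := by
    ext <;> simp [Category.id_comp, coprod.inl_desc, coprod.inr_desc, coprod.inl_desc_assoc, coprod.inr_desc_assoc]
  rw [e7] at e4
  exact e2.trans (e3.trans (e4.trans e1))
end

section
/- Let C be a category with binary coproducts and an initial object, equipped with a monoidal structure (⊗, I) that distributes over coproducts, with δ^r and δ^l the inverses of the canonical distributivity morphisms. Then for all objects A, B, C, D the left and right distributors interchange: (δ^l_{A,B,C} ⊗ 1_D) ≫ δ^r_{A⊗B, A⊗C, D} ≫ (α₁ ⨿ α₂) = α₀ ≫ (1_A ⊗ δ^r_{B,C,D}) ≫ δ^l_{A, B⊗D, C⊗D}, as morphisms (A ⊗ (B ⨿ C)) ⊗ D ⟶ (A ⊗ (B ⊗ D)) ⨿ (A ⊗ (C ⊗ D)), where α₀ : (A ⊗ (B ⨿ C)) ⊗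 D ≅ A ⊗ ((B ⨿ C) ⊗ D), α₁ : (A ⊗ B) ⊗ D ≅ A ⊗ (B ⊗ D), and α₂ : (A ⊗ C) ⊗ D ≅ A ⊗ (C ⊗ D) are the monoidal associators. -/
open CategoryTheory CategoryTheory.Limits CategoryTheory.MonoidalCategory

universe v u

/-- In a distributive monoidal category, the left and right distributors interchange:
`(δˡ_{A,B,C} ⊗ 1_D) ≫ δʳ_{A⊗B,A⊗C,D} ≫ (α₁ ⨿ α₂) = α₀ ≫ (1_A ⊗ δʳ_{B,C,D}) ≫ δˡ_{A,B⊗D,C⊗D}`,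
as morphisms `(A ⊗ (B ⨿ C)) ⊗ D ⟶ (A ⊗ (B ⊗ D)) ⨿ (A ⊗ (C ⊗ D))`. -/
theorem distributors_interchange {C : Type u} [Category.{v} C] [MonoidalCategory C]
    [HasBinaryCoproducts C] [HasInitial C]
    -- the right distributors: inverses of the canonical maps
    (δr : ∀ A B X : C, ((A ⊗ X) ⨿ (B ⊗ X)) ≅ ((A ⨿ B) ⊗ X))
    (hδr : ∀ A B X : C, (δr A B X).hom =
      coprod.desc ((coprod.inl : A ⟶ A ⨿ B) ⊗ₘ 𝟙 X) ((coprod.inr : B ⟶ A ⨿ B) ⊗ₘ 𝟙 X))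
    -- the left distributors: inverses of the canonical maps
    (δl : ∀ X A B : C, ((X ⊗ A) ⨿ (X ⊗ B)) ≅ (X ⊗ (A ⨿ B)))
    (hδl : ∀ X A B : C, (δl X A B).hom =
      coprod.desc (𝟙 X ⊗ₘ (coprod.inl : A ⟶ A ⨿ B)) (𝟙 X ⊗ₘ (coprod.inr : B ⟶ A ⨿ B)))
    -- the annihilators: the maps from the initial object are isomorphisms
    (hannr : ∀ A : C, IsIso (initial.to (A ⊗ ⊥_ C)))
    (hannl : ∀ A : C, IsIso (initial.to ((⊥_ C) ⊗ A)))
    (A B D E : C) :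
    ((δl A B D).inv ⊗ₘ 𝟙 E) ≫ (δr (A ⊗ B) (A ⊗ D) E).inv ≫
        coprod.map (α_ A B E).hom (α_ A D E).hom =
      (α_ A (B ⨿ D) E).hom ≫ (𝟙 A ⊗ₘ (δr B D E).inv) ≫ (δl A (B ⊗ E) (D ⊗ E)).inv := by
  have h1 : ((δl A B D).inv ⊗ₘ 𝟙 E) = (tensorIso (δl A B D) (Iso.refl E)).inv := rfl
  have h2 : (𝟙 A ⊗ₘ (δr B D E).inv) = (tensorIso (Iso.refl A) (δr B D E)).inv := rfl
  rw [h1, h2, Iso.inv_comp_eq, Iso.inv_comp_eq]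
  simp only [← Category.assoc]
  rw [Iso.eq_comp_inv, Iso.eq_comp_inv]
  simp only [tensorIso_hom, Iso.refl_hom, Category.assoc]
  rw [hδr, hδl, hδl, hδr]
  ext
  · simp only [coprod.inl_map_assoc, coprod.inl_map, coprod.inl_desc, coprod.inl_desc_assoc,
      Category.assoc, tensorHom_comp_tensorHom, tensorHom_comp_tensorHom_assoc, Category.id_comp, Category.comp_id]
    rw [associator_naturality]
  · simp only [coprod.inr_map_assoc, coprod.inr_map, coprod.inr_desc, coprod.inr_desc_assoc,
      Category.assoc, tensorHom_comp_tensorHom, tensorHom_comp_tensorHom_assoc, Category.id_comp, Category.comp_id]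
    rw [associator_naturality]
end
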